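/- For every pair κ = ⟨[p₁,…,p_n],[t₁,…,t_n]⟩ of equal-length sequences of positive integers, there is a database-preserving ΣQ-homomorphism from chase_{T_myth}(River_κ) to River_κ if and only if there exists m with 1 ≤ m < n such that t_m ≠ p_{m+1}. -/

import Mathlib

set_option autoImplicit false

/-! ### Terms: constants from 𝐂 (coded `Term.const n`) and nulls from 𝐍 (coded `Term.null n`) -/

inductive Term : Type
  | const : ℕ → Term
  | null  : ℕ → Term
deriving DecidableEq

def Term.isConst : Term → Prop
  | .const _ => True
  | .null _  => False

def termEquiv : Term ≃ ℕ ⊕ ℕ where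
  toFun t := match t with
    | .const n => Sum.inl n
    | .null n  => Sum.inr n
  invFun x := match x with
    | Sum.inl n => .const n
    | Sum.inr n => .null n
  left_inv t := by cases t <;> rfl
  right_inv x := by cases x <;> rfl

instance : Primcodable Term := Primcodable.ofEquiv _ termEquiv

/-! ### Relation symbols (with arity) and schemas -/

structure RelSym : Type where
  name : ℕ
  arity : ℕ
deriving DecidableEq

def relSymEquiv : RelSym ≃ ℕ × ℕ where
  toFun r := (r.name, r.arity)
  invFun p := ⟨p.1, p.2⟩
  left_inv r := rfl
  right_inv p := rfl

instance : Primcodable RelSym := Primcodable.ofEquiv _ relSymEquiv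

/-- A schema is a set of relation symbols. -/
abbrev Schema := Set RelSym

/-! ### Facts, instances, databases -/

structure Fct : Type where
  rel : RelSym
  args : List Term
deriving DecidableEq

def fctEquiv : Fct ≃ RelSym × List Term where
  toFun f := (f.rel, f.args)
  invFun p := ⟨p.1, p.2⟩
  left_inv f := rfl
  right_inv p := rfl

instance : Primcodable Fct := Primcodable.ofEquiv _ fctEquiv

/-- A fact is well-formed if its argument tuple matches the arity of its relation symbol
(arities are ≥ 1). -/
def Fct.wf (f : Fct) : Prop := f.args.length = f.rel.arity ∧ 1 ≤ f.rel.arity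

/-- An instance is a (possibly infinite) set of facts. -/
abbrev Inst := Set Fct

/-- The active domain of an instance. -/
def adom (I : Inst) : Set Term := { t | ∃ f ∈ I, t ∈ f.args }

/-- A database: a finite instance of well-formed facts using only constants from 𝐂. -/
def IsDB (I : Inst) : Prop :=
  I.Finite ∧ ∀ f ∈ I, f.wf ∧ ∀ t ∈ f.args, t.isConst

/-- `I` is a Σ-instance. -/
def InstOver (I : Inst) (S : Schema) : Prop := ∀ f ∈ I, f.rel ∈ S ∧ f.wf

/-- `I` is a Σ-database. -/
def IsDatabase (I : Inst) (S : Schema) : Prop := IsDB I ∧ ∀ f ∈ I, f.rel ∈ S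

/-! ### Homomorphisms -/

def Fct.map (h : Term → Term) (f : Fct) : Fct := ⟨f.rel, f.args.map h⟩

/-- `h` is a Σ-homomorphism from `I` to `J`. -/
def IsHomOn (S : Schema) (h : Term → Term) (I J : Inst) : Prop :=
  ∀ f ∈ I, f.rel ∈ S → f.map h ∈ J

/-- `h` is a homomorphism from `I` to `J` (all relation symbols). -/
def IsFullHom (h : Term → Term) (I J : Inst) : Prop := ∀ f ∈ I, f.map h ∈ J

/-- `h` is database-preserving: it is the identity on all constants from 𝐂. -/
def DBPres (h : Term → Term) : Prop := ∀ n : ℕ, h (Term.const n) = Term.const n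

/-- `I →_Σ J`: there is a database-preserving Σ-homomorphism from `I` to `J`. -/
def HomTo (S : Schema) (I J : Inst) : Prop := ∃ h, DBPres h ∧ IsHomOn S h I J

/-- The induced subinstance of `I` on a set `A` of terms. -/
def restrict (I : Inst) (A : Set Term) : Inst := { f | f ∈ I ∧ ∀ t ∈ f.args, t ∈ A }

/-- `I →ⁿ_Σ J`: every induced subinstance of `I` with at most `n` active-domain elements
admits a database-preserving Σ-homomorphism to `J`. -/
def HomN (S : Schema) (n : ℕ) (I J : Inst) : Prop :=
  ∀ A : Set Term, A ⊆ adom I → A.Finite → A.ncard ≤ n → HomTo S (restrict I A) J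

/-- `I →^lim_Σ J`. -/
def HomLim (S : Schema) (I J : Inst) : Prop := ∀ n : ℕ, 1 ≤ n → HomN S n I J

/-- Homomorphic equivalence of instances. -/
def HomEquiv (I J : Inst) : Prop := (∃ h, IsFullHom h I J) ∧ (∃ h, IsFullHom h J I)

/-! ### Gaifman graph and connectedness -/

def coOccur (I : Inst) (a b : Term) : Prop := ∃ f ∈ I, a ∈ f.args ∧ b ∈ f.args

/-- The Gaifman graph of `I` is connected. -/
def Connected (I : Inst) : Prop :=
  ∀ a ∈ adom I, ∀ b ∈ adom I, Relation.ReflTransGen (coOccur I) a b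

/-- Restriction `I|_Σ` of `I` to the facts using a relation symbol from Σ. -/
def restrS (I : Inst) (S : Schema) : Inst := { f | f ∈ I ∧ f.rel ∈ S }

/-- `I` is Σ-connected. -/
def SConnected (S : Schema) (I : Inst) : Prop := Connected (restrS I S)

/-- `C` is a maximally Σ-connected component of `I`. -/
def MaxConnComp (S : Schema) (I C : Inst) : Prop :=
  C ⊆ restrS I S ∧ Connected C ∧
    ∀ C', C ⊆ C' → C' ⊆ restrS I S → Connected C' → C' = C

/-! ### Conjunctive queries -/

structure Atom : Type where
  rel : RelSym
  args : List ℕ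
deriving DecidableEq

def atomEquiv : Atom ≃ RelSym × List ℕ where
  toFun a := (a.rel, a.args)
  invFun p := ⟨p.1, p.2⟩
  left_inv a := rfl
  right_inv p := rfl

instance : Primcodable Atom := Primcodable.ofEquiv _ atomEquiv

def Atom.wf (a : Atom) : Prop := a.args.length = a.rel.arity ∧ 1 ≤ a.rel.arity

/-- Instantiate an atom by an assignment of terms to variables. -/
def Atom.inst (h : ℕ → Term) (a : Atom) : Fct := ⟨a.rel, a.args.map h⟩

/-- A conjunctive query: a finite set of relational atoms (as a list) together with a
tuple of answer variables. -/
structure CQ : Type where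
  atoms : List Atom
  ans : List ℕ
deriving DecidableEq

def cqEquiv : CQ ≃ List Atom × List ℕ where
  toFun q := (q.atoms, q.ans)
  invFun p := ⟨p.1, p.2⟩
  left_inv q := rfl
  right_inv p := rfl

instance : Primcodable CQ := Primcodable.ofEquiv _ cqEquiv

/-- `q` is a CQ over schema Σ. -/
def CQ.Over (q : CQ) (S : Schema) : Prop := ∀ a ∈ q.atoms, a.rel ∈ S ∧ a.wf

/-- A homomorphism from `q` to `I`. -/
def CQHom (q : CQ) (I : Inst) (h : ℕ → Term) : Prop := ∀ a ∈ q.atoms, a.inst h ∈ I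

/-- `c̄` is an answer to `q` on `I`. -/
def IsAnswer (q : CQ) (I : Inst) (c : List Term) : Prop :=
  (∀ x ∈ c, x ∈ adom I) ∧ ∃ h, CQHom q I h ∧ q.ans.map h = c

/-- The canonical database of a CQ (variables viewed as constants/nulls). -/
def canonDB (q : CQ) : Inst := { f | ∃ a ∈ q.atoms, f = a.inst Term.null }

/-! ### Tuple-generating dependencies -/

/-- A TGD `∀x̄∀ȳ (φ(x̄,ȳ) → ∃z̄ ψ(x̄,z̄))`, with `frontier` the tuple `x̄` of
frontier variables. -/
structure TGD : Type where
  body : List Atom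
  head : List Atom
  frontier : List ℕ
deriving DecidableEq

def tgdEquiv : TGD ≃ List Atom × List Atom × List ℕ where
  toFun t := (t.body, t.head, t.frontier)
  invFun p := ⟨p.1, p.2.1, p.2.2⟩
  left_inv t := rfl
  right_inv p := rfl

instance : Primcodable TGD := Primcodable.ofEquiv _ tgdEquiv

def TGD.bodyVars (t : TGD) : Set ℕ := { x | ∃ a ∈ t.body, x ∈ a.args }
def TGD.headVars (t : TGD) : Set ℕ := { x | ∃ a ∈ t.head, x ∈ a.args }

/-- Well-formedness of a TGD: atoms are well-formed, the frontier variables are distinct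
body variables, and every variable shared by body and head is a frontier variable. -/
def TGD.wf (t : TGD) : Prop :=
  (∀ a ∈ t.body, a.wf) ∧ (∀ a ∈ t.head, a.wf) ∧ t.frontier.Nodup ∧
  (∀ x ∈ t.frontier, x ∈ t.bodyVars) ∧
  (∀ x, x ∈ t.bodyVars → x ∈ t.headVars → x ∈ t.frontier)

/-- A TGD is linear if its body contains at most one atom. -/
def TGD.Linear (t : TGD) : Prop := t.body.length ≤ 1

/-- A TGD is guarded if some body atom contains all body variables. -/
def TGD.Guarded (t : TGD) : Prop := ∃ a ∈ t.body, ∀ x, x ∈ t.bodyVars → x ∈ a.args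

/-- A TGD is frontier-one if it has exactly one frontier variable. -/
def TGD.FrontierOne (t : TGD) : Prop := t.frontier.length = 1

/-- `I ⊨ ϑ`. -/
def TGD.Satisfies (I : Inst) (t : TGD) : Prop :=
  ∀ g : ℕ → Term, (∀ a ∈ t.body, a.inst g ∈ I) →
    ∃ h : ℕ → Term, (∀ a ∈ t.head, a.inst h ∈ I) ∧ ∀ x ∈ t.frontier, h x = g x

/-- `I` is a model of the set `T` of TGDs. -/
def IsModel (I : Inst) (T : List TGD) : Prop := ∀ t ∈ T, TGD.Satisfies I t

/-- Number of (distinct) variables in the body of a TGD. -/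
def TGD.bodyVarList (t : TGD) : List ℕ := ((t.body.map Atom.args).flatten).dedup

/-- The body width of a set of TGDs. -/
def bodyWidth (T : List TGD) : ℕ := (T.map (fun t => t.bodyVarList.length)).foldr max 0

/-! ### The chase -/

/-- `ϑ` is applicable at tuple `c̄` in `I`. -/
def TGD.Applicable (t : TGD) (I : Inst) (c : List Term) : Prop :=
  (∃ g : ℕ → Term, (∀ a ∈ t.body, a.inst g ∈ I) ∧ t.frontier.map g = c) ∧
  ¬ (∃ h : ℕ → Term, (∀ a ∈ t.head, a.inst h ∈ I) ∧ t.frontier.map h = c)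

/-- `J` is the result of applying `ϑ` in `I` at `c̄`: the head is added, with the
existential variables replaced by distinct fresh nulls. -/
def TGD.StepResult (t : TGD) (I : Inst) (c : List Term) (J : Inst) : Prop :=
  ∃ h : ℕ → Term,
    t.frontier.map h = c ∧
    (∀ x, x ∈ t.headVars → x ∉ t.frontier → (¬ (h x).isConst ∧ h x ∉ adom I)) ∧
    (∀ x y, x ∈ t.headVars → y ∈ t.headVars → x ∉ t.frontier → y ∉ t.frontier →
      h x = h y → x = y) ∧
    J = I ∪ { f | ∃ a ∈ t.head, f = a.inst h }

/-- A chase step from `I` to `J` with some TGD of `T`. -/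
def ChaseStep (T : List TGD) (I J : Inst) : Prop :=
  ∃ t ∈ T, ∃ c, t.Applicable I c ∧ t.StepResult I c J

/-- A chase sequence for `I` with `T` (stalling when no TGD is applicable). -/
def IsChaseSeq (T : List TGD) (I : Inst) (f : ℕ → Inst) : Prop :=
  f 0 = I ∧ ∀ i, ChaseStep T (f i) (f (i+1)) ∨ ((¬ ∃ J, ChaseStep T (f i) J) ∧ f (i+1) = f i)

/-- Fairness: every applicable TGD application is eventually performed or becomes
non-applicable. -/
def IsFair (T : List TGD) (f : ℕ → Inst) : Prop :=
  ∀ i, ∀ t ∈ T, ∀ c, TGD.Applicable t (f i) c →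
    ∃ j, i ≤ j ∧
      ((TGD.Applicable t (f j) c ∧ TGD.StepResult t (f j) c (f (j+1))) ∨
        ¬ TGD.Applicable t (f j) c)

/-- `J` is the result of some fair chase sequence for `I` with `T`. -/
def IsChaseResult (T : List TGD) (I J : Inst) : Prop :=
  ∃ f : ℕ → Inst, IsChaseSeq T I f ∧ IsFair T f ∧ J = ⋃ i, f i

/-- `chase T I`: the result of an arbitrary but fixed fair chase sequence for `I` with `T`. -/
noncomputable def chase (T : List TGD) (I : Inst) : Inst :=
  @dite _ (∃ J, IsChaseResult T I J) (Classical.dec _) (fun h => h.choose) (fun _ => I)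

/-! ### The set of TGDs `T_myth`, the schema `ΣQ`, and the databases `River_κ` -/

def EncR : RelSym := ⟨0, 2⟩
def MR : RelSym := ⟨1, 5⟩
def PyrR : RelSym := ⟨2, 2⟩
def ThiR : RelSym := ⟨3, 2⟩
def ChnR : RelSym := ⟨4, 2⟩
def MouthR : RelSym := ⟨5, 1⟩

/-- The query schema `ΣQ = {Pyramus, Thisbe, Channel, Encounter, Mouth}`. -/
def SQmyth : Schema := {PyrR, ThiR, ChnR, EncR, MouthR}

/-- `T_myth`: `Encounter(p,t) → ∃p',c,t' M(p,p',c,t',t)`;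
`M(p,p',c,t',t) → ∃p'',c',t'' M(p',p'',c',t'',t')`;
`M(p,p',c,t',t) → Pyramus(p,p') ∧ Thisbe(t,t') ∧ Channel(c,p') ∧ Channel(c,t')`
(variables coded by the numbers `0,1,2,…`). -/
def Tmyth : List TGD :=
  [ ⟨[⟨EncR, [0, 1]⟩], [⟨MR, [0, 2, 3, 4, 1]⟩], [0, 1]⟩,
    ⟨[⟨MR, [0, 1, 2, 3, 4]⟩], [⟨MR, [1, 5, 6, 7, 3]⟩], [1, 3]⟩,
    ⟨[⟨MR, [0, 1, 2, 3, 4]⟩],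
      [⟨PyrR, [0, 1]⟩, ⟨ThiR, [4, 3]⟩, ⟨ChnR, [2, 1]⟩, ⟨ChnR, [2, 3]⟩], [0, 1, 2, 3, 4]⟩ ]

/-- The eternity `e₁`. -/
def e1 : Term := .const (Nat.pair 0 0)
/-- The eternity `e₂`. -/
def e2 : Term := .const (Nat.pair 1 0)
/-- The channel `c`. -/
def chanC : Term := .const (Nat.pair 2 0)
/-- The bridge `b_i`. -/
def br (i : ℕ) : Term := .const (Nat.pair 3 i)
/-- The `j`-th intermediate constant on the Pyramus-path of the `i`-th segment. -/
def pyrC (i j : ℕ) : Term := .const (Nat.pair 4 (Nat.pair i j))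
/-- The `j`-th intermediate constant on the Thisbe-path of the `i`-th segment. -/
def thiC (i j : ℕ) : Term := .const (Nat.pair 5 (Nat.pair i j))

/-- The `j`-th node (counted from `b_{i-1}`) on the Pyramus-path from `b_i` to `b_{i-1}`. -/
def pnode (p : List ℕ) (i j : ℕ) : Term :=
  if j = 0 then br (i - 1) else if j = p.getD (i - 1) 0 then br i else pyrC i j

/-- The `j`-th node (counted from `b_{i-1}`) on the Thisbe-path from `b_i` to `b_{i-1}`. -/
def tnode (t : List ℕ) (i j : ℕ) : Term :=
  if j = 0 then br (i - 1) else if j = t.getD (i - 1) 0 then br i else thiC i j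

def f2 (R : RelSym) (a b : Term) : Fct := ⟨R, [a, b]⟩

/-- The worldly constants of `River_⟨p,t⟩` (all constants except `e₁`, `e₂`, `c`). -/
def Worldly (p t : List ℕ) (a : Term) : Prop :=
  (∃ i, i ≤ p.length ∧ a = br i) ∨
  (∃ i j, 1 ≤ i ∧ i ≤ p.length ∧ 1 ≤ j ∧ j < p.getD (i - 1) 0 ∧ a = pyrC i j) ∨
  (∃ i j, 1 ≤ i ∧ i ≤ t.length ∧ 1 ≤ j ∧ j < t.getD (i - 1) 0 ∧ a = thiC i j)

/-- The database `River_κ` for `κ = ⟨[p₁,…,p_n], [t₁,…,t_n]⟩`. -/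
def River (p t : List ℕ) : Inst :=
  { f | ∃ i j, 1 ≤ i ∧ i ≤ p.length ∧ 1 ≤ j ∧ j ≤ p.getD (i - 1) 0 ∧
        f = f2 PyrR (pnode p i j) (pnode p i (j - 1)) } ∪
  { f | ∃ i j, 1 ≤ i ∧ i ≤ t.length ∧ 1 ≤ j ∧ j ≤ t.getD (i - 1) 0 ∧
        f = f2 ThiR (tnode t i j) (tnode t i (j - 1)) } ∪
  { f | ∃ i j, 1 ≤ i ∧ i ≤ t.length ∧ 1 ≤ j ∧ j < t.getD (i - 1) 0 ∧
        f = f2 ThiR (thiC i j) e1 } ∪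
  { f | ∃ i j, 1 ≤ i ∧ i ≤ p.length ∧ 1 ≤ j ∧ j < p.getD (i - 1) 0 ∧
        f = f2 PyrR (pyrC i j) e2 } ∪
  { f | ∃ i, i ≤ p.length ∧ (f = f2 ThiR (br i) e2 ∨ f = f2 PyrR (br i) e1) } ∪
  { f2 PyrR e1 e1, f2 ThiR e1 e1, f2 ChnR e1 e1,
    f2 PyrR e2 e2, f2 ThiR e2 e2, f2 ChnR e2 e2 } ∪
  { f | ∃ a, Worldly p t a ∧ f = f2 ChnR chanC a } ∪
  { f2 EncR (br p.length) (br (p.length - 1)), ⟨MouthR, [br 0]⟩ }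

/-!
A database-preserving `ΣQ`-homomorphism from the chase back to `River_κ` exists iff `River_κ`
contains a *myth walk*: an infinite Pyramus walk `a` from `b_n` and an infinite Thisbe walk `b`
from `b_{n-1}` whose `k`-th steps end at nodes with a common Channel predecessor. Indeed, the chase
is an infinite chain of M-facts whose `ΣQ`-part is such a walk; conversely, a walk in `River_κ`
turns `River_κ` into a model of `T_myth` by adding the corresponding M-chain, and by universality
the chase maps into that model.

A common Channel predecessor forces both walks to stay among the worldly constants or to enter the
same eternity. A Pyramus walk enters `e₁` only from a bridge and `e₂` only from inside a path; for
Thisbe it is the other way round. If `t_m = p_{m+1}` for all `m`, the two walks reach `b_i` and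
`b_{i-1}` at the same time, so they can never escape together, and the Thisbe walk gets stuck at
`b₀`. Otherwise, for the largest `m` with `t_m ≠ p_{m+1}`, one walk reaches a bridge while the
other is strictly inside a path, and both escape to the same eternity.
-/

/-! ### The river -/

lemma f2_inj {R R' : RelSym} {a b a' b' : Term} :
    f2 R a b = f2 R' a' b' ↔ R = R' ∧ a = a' ∧ b = b' := by
  simp [f2]

lemma br_injective : Function.Injective br := by
  intro i j h
  simpa [br] using h

def PathIdx (l : List ℕ) (a b : ℕ) : Prop :=
  1 ≤ a ∧ a ≤ l.length ∧ 1 ≤ b ∧ b ≤ l.getD (a - 1) 0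

namespace River

variable {p t : List ℕ}

lemma mem_iff {f : Fct} : f ∈ River p t ↔
    (∃ i j, PathIdx p i j ∧ f = f2 PyrR (pnode p i j) (pnode p i (j - 1))) ∨
    (∃ i j, PathIdx t i j ∧ f = f2 ThiR (tnode t i j) (tnode t i (j - 1))) ∨
    (∃ i j, 1 ≤ i ∧ i ≤ t.length ∧ 1 ≤ j ∧ j < t.getD (i - 1) 0 ∧ f = f2 ThiR (thiC i j) e1) ∨
    (∃ i j, 1 ≤ i ∧ i ≤ p.length ∧ 1 ≤ j ∧ j < p.getD (i - 1) 0 ∧ f = f2 PyrR (pyrC i j) e2) ∨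
    (∃ i, i ≤ p.length ∧ (f = f2 ThiR (br i) e2 ∨ f = f2 PyrR (br i) e1)) ∨
    (f = f2 PyrR e1 e1 ∨ f = f2 ThiR e1 e1 ∨ f = f2 ChnR e1 e1 ∨ f = f2 PyrR e2 e2 ∨
      f = f2 ThiR e2 e2 ∨ f = f2 ChnR e2 e2) ∨
    (∃ a, Worldly p t a ∧ f = f2 ChnR chanC a) ∨
    (f = f2 EncR (br p.length) (br (p.length - 1)) ∨ f = ⟨MouthR, [br 0]⟩) := by
  simp only [River, PathIdx, Set.mem_union, Set.mem_ofPred_eq, Set.mem_insert_iff,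
    Set.mem_singleton_iff, or_assoc, and_assoc]

lemma of_pyr_mem {x y : Term} (h : f2 PyrR x y ∈ River p t) :
    (∃ i j, PathIdx p i j ∧ x = pnode p i j ∧ y = pnode p i (j - 1)) ∨
    (∃ i j, 1 ≤ i ∧ i ≤ p.length ∧ 1 ≤ j ∧ j < p.getD (i - 1) 0 ∧ x = pyrC i j ∧ y = e2) ∨
    (∃ i, i ≤ p.length ∧ x = br i ∧ y = e1) ∨ (x = e1 ∧ y = e1) ∨ (x = e2 ∧ y = e2) := by
  simpa [mem_iff, PathIdx, f2_inj, PyrR, ThiR, ChnR, EncR, MouthR, f2, and_assoc] using h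

lemma of_thi_mem {x y : Term} (h : f2 ThiR x y ∈ River p t) :
    (∃ i j, PathIdx t i j ∧ x = tnode t i j ∧ y = tnode t i (j - 1)) ∨
    (∃ i j, 1 ≤ i ∧ i ≤ t.length ∧ 1 ≤ j ∧ j < t.getD (i - 1) 0 ∧ x = thiC i j ∧ y = e1) ∨
    (∃ i, i ≤ p.length ∧ x = br i ∧ y = e2) ∨ (x = e1 ∧ y = e1) ∨ (x = e2 ∧ y = e2) := by
  simpa [mem_iff, PathIdx, f2_inj, PyrR, ThiR, ChnR, EncR, MouthR, f2, and_assoc] using h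

lemma of_chn_mem {x y : Term} (h : f2 ChnR x y ∈ River p t) :
    (x = chanC ∧ Worldly p t y) ∨ (x = e1 ∧ y = e1) ∨ (x = e2 ∧ y = e2) := by
  simp [mem_iff, PyrR, ThiR, ChnR, EncR, MouthR, f2] at h
  tauto

lemma of_enc_mem {x y : Term} (h : f2 EncR x y ∈ River p t) :
    x = br p.length ∧ y = br (p.length - 1) := by
  simpa [mem_iff, PathIdx, f2_inj, PyrR, ThiR, ChnR, EncR, MouthR, f2, and_assoc] using h

lemma rel_ne_MR {f : Fct} (h : f ∈ River p t) : f.rel ≠ MR := by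
  rw [mem_iff] at h
  rcases h with ⟨_, _, -, rfl⟩ | ⟨_, _, -, rfl⟩ | ⟨_, _, -, -, -, -, rfl⟩ |
    ⟨_, _, -, -, -, -, rfl⟩ | ⟨_, -, rfl | rfl⟩ | (rfl | rfl | rfl | rfl | rfl | rfl) |
    ⟨_, -, rfl⟩ | (rfl | rfl) <;> simp [f2, PyrR, ThiR, ChnR, EncR, MouthR, MR]

lemma isConst_of_mem {F : Fct} (h : F ∈ River p t) :
    ∀ z ∈ F.args, z.isConst := by
  have hp : ∀ i j, (pnode p i j).isConst := fun i j => by unfold pnode; split_ifs <;> trivial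
  have ht : ∀ i j, (tnode t i j).isConst := fun i j => by unfold tnode; split_ifs <;> trivial
  have hw : ∀ a, Worldly p t a → a.isConst := by
    rintro a (⟨_, -, rfl⟩ | ⟨_, _, -, -, -, -, rfl⟩ | ⟨_, _, -, -, -, -, rfl⟩) <;> trivial
  rw [mem_iff] at h
  rcases h with ⟨_, _, -, rfl⟩ | ⟨_, _, -, rfl⟩ | ⟨_, _, -, -, -, -, rfl⟩ |
    ⟨_, _, -, -, -, -, rfl⟩ | ⟨_, -, rfl | rfl⟩ | (rfl | rfl | rfl | rfl | rfl | rfl) |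
    ⟨a, ha, rfl⟩ | (rfl | rfl) <;>
    simp only [f2, List.mem_cons, List.not_mem_nil, or_false, forall_eq_or_imp, forall_eq] <;>
    first | exact ⟨hp _ _, hp _ _⟩ | exact ⟨ht _ _, ht _ _⟩ | exact ⟨trivial, hw a ha⟩ |
      exact ⟨trivial, trivial⟩ | trivial

end River

/-! ### Walking along the paths of the river -/

lemma one_le_getD {l : List ℕ} (hl : ∀ x ∈ l, 1 ≤ x) {i : ℕ} (hi : i < l.length) :
    1 ≤ l.getD i 0 := by
  rw [List.getD_eq_getElem l 0 hi]
  exact hl _ (List.getElem_mem hi)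

/-- The `j`-th node, counted from `b_{i-1}`, of a path of length `l_i` from `b_i` to `b_{i-1}`
whose inner nodes are `inner i j`; `pnode p` and `tnode t` are `pathNode p pyrC` and
`pathNode t thiC` by definition. -/
def pathNode (l : List ℕ) (inner : ℕ → ℕ → Term) (i j : ℕ) : Term :=
  if j = 0 then br (i - 1) else if j = l.getD (i - 1) 0 then br i else inner i j

section PathNode

variable {l : List ℕ} {inner : ℕ → ℕ → Term}

@[simp] lemma pathNode_zero (i : ℕ) : pathNode l inner (i + 1) 0 = br i := rfl

lemma pathNode_getD {i : ℕ} (h : 1 ≤ l.getD i 0) :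
    pathNode l inner (i + 1) (l.getD i 0) = br (i + 1) := by
  rw [pathNode, if_neg (by omega), if_pos (by simp)]

lemma pathNode_of_lt {i j : ℕ} (h0 : 0 < j) (hj : j < l.getD (i - 1) 0) :
    pathNode l inner i j = inner i j := by
  rw [pathNode, if_neg (by omega), if_neg (by omega)]

lemma pathNode_eq_br (hbr : ∀ i j c, inner i j ≠ br c) {a b c : ℕ} (hab : PathIdx l a b)
    (h : pathNode l inner a b = br c) : c = a ∧ b = l.getD (a - 1) 0 := by
  obtain ⟨-, -, hb1, -⟩ := hab
  unfold pathNode at h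
  split_ifs at h with h0 hb
  · omega
  · exact ⟨(br_injective h).symm, hb⟩
  · exact absurd h (hbr a b c)

lemma pathNode_injOn (hbr : ∀ i j c, inner i j ≠ br c) (hinj : Function.Injective2 inner)
    {a b a' b' : ℕ} (hab : PathIdx l a b) (hab' : PathIdx l a' b')
    (h : pathNode l inner a b = pathNode l inner a' b') : a = a' ∧ b = b' := by
  obtain ⟨-, -, hb, -⟩ := hab
  obtain ⟨-, -, hb', -⟩ := hab'
  unfold pathNode at h
  split_ifs at h with h0 h1 h0' h1' h1' <;> first
    | omega
    | exact absurd h (hbr _ _ _)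
    | exact absurd h.symm (hbr _ _ _)
    | exact hinj h
    | (obtain rfl := br_injective h; omega)

end PathNode

/-- `segSum l a b = l_{a+1} + ⋯ + l_b` in the paper's 1-based indexing: the length of the path
from `b_b` down to `b_a`. -/
def segSum (l : List ℕ) (a b : ℕ) : ℕ := ∑ x ∈ Finset.Ico a b, l.getD x 0

section SegSum

variable {l : List ℕ}

@[simp] lemma segSum_self (a : ℕ) : segSum l a a = 0 := by simp [segSum]

lemma segSum_succ {a b : ℕ} (h : a ≤ b) : segSum l a (b + 1) = segSum l a b + l.getD b 0 :=
  Finset.sum_Ico_succ_top h _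

lemma segSum_add_segSum {a b c : ℕ} (hab : a ≤ b) (hbc : b ≤ c) :
    segSum l a b + segSum l b c = segSum l a c :=
  Finset.sum_Ico_consecutive _ hab hbc

lemma segSum_le_segSum {a a' b b' : ℕ} (ha : a' ≤ a) (hb : b ≤ b') :
    segSum l a b ≤ segSum l a' b' :=
  Finset.sum_le_sum_of_subset (Finset.Ico_subset_Ico ha hb)

lemma segSum_shift {l' : List ℕ} {m n : ℕ}
    (hs : ∀ x, m ≤ x → x + 1 < n → l.getD x 0 = l'.getD (x + 1) 0) {a b : ℕ}
    (ha : m ≤ a) (hb : b + 1 ≤ n) : segSum l a b = segSum l' (a + 1) (b + 1) := by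
  rw [segSum, segSum, ← Finset.sum_Ico_add' (fun x => l'.getD x 0)]
  exact Finset.sum_congr rfl fun x hx => by
    rw [Finset.mem_Ico] at hx
    exact hs x (by omega) (by omega)

end SegSum

/-- The node reached after `k` steps when walking from `b_i` towards `b_0` along the paths of
lengths `l`; the walk stays at `b_0` once it gets there. -/
def pathWalk (l : List ℕ) (inner : ℕ → ℕ → Term) : ℕ → ℕ → Term
  | 0, _ => br 0
  | i + 1, k =>
    if k < l.getD i 0 then pathNode l inner (i + 1) (l.getD i 0 - k)
    else pathWalk l inner i (k - l.getD i 0)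

section PathWalk

variable {l : List ℕ} {inner : ℕ → ℕ → Term}

lemma pathWalk_succ (i k : ℕ) : pathWalk l inner (i + 1) k =
    if k < l.getD i 0 then pathNode l inner (i + 1) (l.getD i 0 - k)
    else pathWalk l inner i (k - l.getD i 0) := rfl

lemma pathWalk_segSum_add {m i : ℕ} (hmi : m ≤ i) (d : ℕ) :
    pathWalk l inner i (segSum l m i + d) = pathWalk l inner m d := by
  induction i, hmi using Nat.le_induction with
  | base => simp
  | succ i hmi ih =>
    rw [pathWalk_succ, segSum_succ hmi, if_neg (by omega),
      show segSum l m i + l.getD i 0 + d - l.getD i 0 = segSum l m i + d by omega, ih]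

lemma pathWalk_start (hl : ∀ x ∈ l, 1 ≤ x) {i : ℕ} (hi : i ≤ l.length) :
    pathWalk l inner i 0 = br i := by
  cases i with
  | zero => rfl
  | succ i =>
    have := one_le_getD hl (show i < l.length by omega)
    rw [pathWalk_succ, if_pos (by omega), Nat.sub_zero, pathNode_getD this]

lemma pathWalk_segSum (hl : ∀ x ∈ l, 1 ≤ x) {m i : ℕ} (hmi : m ≤ i) (hi : i ≤ l.length) :
    pathWalk l inner i (segSum l m i) = br m := by
  simpa using (pathWalk_segSum_add hmi 0).trans (pathWalk_start hl (hmi.trans hi))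

lemma pathWalk_segSum_add_of_lt {m i d : ℕ} (hmi : m + 1 ≤ i) (hd : 0 < d)
    (hdm : d < l.getD m 0) :
    pathWalk l inner i (segSum l (m + 1) i + d) = inner (m + 1) (l.getD m 0 - d) := by
  rw [pathWalk_segSum_add hmi, pathWalk_succ, if_pos hdm,
    pathNode_of_lt (by omega) (by rw [Nat.add_sub_cancel]; omega)]

lemma pathWalk_cases {i : ℕ} (hi : i ≤ l.length) (k : ℕ) :
    (∃ a b, PathIdx l a b ∧ pathWalk l inner i k = pathNode l inner a b) ∨
      pathWalk l inner i k = br 0 := by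
  induction i generalizing k with
  | zero => exact Or.inr rfl
  | succ i ih =>
    rw [pathWalk_succ]
    split_ifs with hk
    · exact Or.inl ⟨i + 1, l.getD i 0 - k, ⟨by omega, hi, by omega, by simp⟩, rfl⟩
    · exact ih (by omega) _

lemma pathWalk_edge (hl : ∀ x ∈ l, 1 ≤ x) {i : ℕ} (hi : i ≤ l.length) {k : ℕ}
    (hk : k < segSum l 0 i) :
    ∃ a b, PathIdx l a b ∧ pathWalk l inner i k = pathNode l inner a b ∧
      pathWalk l inner i (k + 1) = pathNode l inner a (b - 1) := by
  induction i generalizing k with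
  | zero => simp at hk
  | succ i ih =>
    rw [segSum_succ (Nat.zero_le i)] at hk
    have hpos := one_le_getD hl (show i < l.length by omega)
    rw [pathWalk_succ, pathWalk_succ]
    by_cases hlt : k < l.getD i 0
    · refine ⟨i + 1, l.getD i 0 - k, ⟨by omega, hi, by omega, by simp⟩, if_pos hlt, ?_⟩
      split_ifs with hlt'
      · rw [Nat.sub_sub]
      · rw [show k + 1 - l.getD i 0 = 0 by omega, show l.getD i 0 - k - 1 = 0 by omega,
          pathWalk_start hl (by omega), pathNode_zero]
    · rw [if_neg hlt, if_neg (by omega), show k + 1 - l.getD i 0 = k - l.getD i 0 + 1 by omega]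
      exact ih (by omega) (by omega)

lemma pathWalk_eq_br (hbr : ∀ i j c, inner i j ≠ br c) {i : ℕ}
    (hi : i ≤ l.length) {k c : ℕ} (hk : k ≤ segSum l 0 i) (h : pathWalk l inner i k = br c) :
    c ≤ i ∧ k = segSum l c i := by
  induction i generalizing k with
  | zero =>
    obtain rfl : 0 = c := br_injective h
    simpa using hk
  | succ i ih =>
    rw [segSum_succ (Nat.zero_le i)] at hk
    rw [pathWalk_succ] at h
    split_ifs at h with hlt
    · obtain ⟨rfl, hb⟩ := pathNode_eq_br hbr ⟨by omega, hi, by omega, by simp⟩ h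
      simp only [Nat.add_sub_cancel] at hb
      obtain rfl : k = 0 := by omega
      simp
    · obtain ⟨hci, hc⟩ := ih (by omega) (by omega) h
      rw [segSum_succ hci]
      omega

lemma pathWalk_succ_of_eq (hl : ∀ x ∈ l, 1 ≤ x) (hbr : ∀ i j c, inner i j ≠ br c)
    (hinj : Function.Injective2 inner) {i : ℕ} (hi : i ≤ l.length) {k : ℕ}
    (hk : k < segSum l 0 i) {a b : ℕ} (hab : PathIdx l a b)
    (h : pathWalk l inner i k = pathNode l inner a b) :
    pathWalk l inner i (k + 1) = pathNode l inner a (b - 1) := by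
  obtain ⟨a', b', hab', hk, hk1⟩ := pathWalk_edge (inner := inner) hl hi hk
  obtain ⟨rfl, rfl⟩ := pathNode_injOn hbr hinj hab' hab (hk.symm.trans h)
  exact hk1

end PathWalk

lemma pyrC_ne_br (i j c : ℕ) : pyrC i j ≠ br c := by simp [pyrC, br]

lemma thiC_ne_br (i j c : ℕ) : thiC i j ≠ br c := by simp [thiC, br]

lemma pyrC_injective2 : Function.Injective2 pyrC := fun _ _ _ _ h => by simpa [pyrC] using h

lemma thiC_injective2 : Function.Injective2 thiC := fun _ _ _ _ h => by simpa [thiC] using h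

namespace Worldly

variable {p t : List ℕ} {x : Term}

lemma ne_e1 (h : Worldly p t x) : x ≠ e1 := by
  rcases h with ⟨_, -, rfl⟩ | ⟨_, _, -, -, -, -, rfl⟩ | ⟨_, _, -, -, -, -, rfl⟩ <;>
    simp [br, pyrC, thiC, e1]

lemma ne_e2 (h : Worldly p t x) : x ≠ e2 := by
  rcases h with ⟨_, -, rfl⟩ | ⟨_, _, -, -, -, -, rfl⟩ | ⟨_, _, -, -, -, -, rfl⟩ <;>
    simp [br, pyrC, thiC, e2]

end Worldly

section Worldly

variable {p t : List ℕ}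

lemma worldly_br {i : ℕ} (h : i ≤ p.length) : Worldly p t (br i) := Or.inl ⟨i, h, rfl⟩

lemma worldly_pnode {a b : ℕ} (ha : 1 ≤ a) (ha' : a ≤ p.length) (hb : b ≤ p.getD (a - 1) 0) :
    Worldly p t (pnode p a b) := by
  unfold pnode
  split_ifs with h0 h1
  · exact worldly_br (by omega)
  · exact worldly_br ha'
  · exact Or.inr (Or.inl ⟨a, b, ha, ha', by omega, by omega, rfl⟩)

lemma worldly_tnode (hlen : p.length = t.length) {a b : ℕ} (ha : 1 ≤ a) (ha' : a ≤ t.length)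
    (hb : b ≤ t.getD (a - 1) 0) : Worldly p t (tnode t a b) := by
  unfold tnode
  split_ifs with h0 h1
  · exact worldly_br (by omega)
  · exact worldly_br (by omega)
  · exact Or.inr (Or.inr ⟨a, b, ha, ha', by omega, by omega, rfl⟩)

lemma worldly_pyrWalk {i : ℕ} (hi : i ≤ p.length) (k : ℕ) :
    Worldly p t (pathWalk p pyrC i k) := by
  rcases pathWalk_cases (inner := pyrC) hi k with ⟨a, b, ⟨ha, ha', -, hb⟩, h⟩ | h <;> rw [h]
  · exact worldly_pnode ha ha' hb
  · exact worldly_br (Nat.zero_le _)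

lemma worldly_thiWalk (hlen : p.length = t.length) {i : ℕ} (hi : i ≤ t.length) (k : ℕ) :
    Worldly p t (pathWalk t thiC i k) := by
  rcases pathWalk_cases (inner := thiC) hi k with ⟨a, b, ⟨ha, ha', -, hb⟩, h⟩ | h <;> rw [h]
  · exact worldly_tnode hlen ha ha' hb
  · exact worldly_br (Nat.zero_le _)

end Worldly

namespace River

variable {p t : List ℕ} {x y : Term}

lemma chn_pair {γ : Term} (hx : f2 ChnR γ x ∈ River p t) (hy : f2 ChnR γ y ∈ River p t) :
    (Worldly p t x ∧ Worldly p t y) ∨ (x = e1 ∧ y = e1) ∨ (x = e2 ∧ y = e2) := by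
  rcases of_chn_mem hx with ⟨rfl, hx⟩ | ⟨rfl, rfl⟩ | ⟨rfl, rfl⟩ <;>
    rcases of_chn_mem hy with ⟨h, hy⟩ | ⟨h, rfl⟩ | ⟨h, rfl⟩ <;>
    simp_all [chanC, e1, e2]

lemma pyr_edge_of_worldly (h : f2 PyrR x y ∈ River p t) (hy : Worldly p t y) :
    ∃ a b, PathIdx p a b ∧ x = pnode p a b ∧ y = pnode p a (b - 1) := by
  rcases of_pyr_mem h with h | ⟨_, _, -, -, -, -, -, rfl⟩ | ⟨_, -, -, rfl⟩ | ⟨-, rfl⟩ | ⟨-, rfl⟩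
  · exact h
  all_goals first | exact absurd rfl hy.ne_e1 | exact absurd rfl hy.ne_e2

lemma thi_edge_of_worldly (h : f2 ThiR x y ∈ River p t) (hy : Worldly p t y) :
    ∃ a b, PathIdx t a b ∧ x = tnode t a b ∧ y = tnode t a (b - 1) := by
  rcases of_thi_mem h with h | ⟨_, _, -, -, -, -, -, rfl⟩ | ⟨_, -, -, rfl⟩ | ⟨-, rfl⟩ | ⟨-, rfl⟩
  · exact h
  all_goals first | exact absurd rfl hy.ne_e1 | exact absurd rfl hy.ne_e2

lemma eq_br_of_pyr_e1 (h : f2 PyrR x e1 ∈ River p t) (hx : Worldly p t x) : ∃ i, x = br i := by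
  rcases of_pyr_mem h with ⟨a, b, -, -, hy⟩ | ⟨_, _, -, -, -, -, -, hy⟩ | ⟨i, -, rfl, -⟩ |
    ⟨rfl, -⟩ | ⟨-, hy⟩
  · exact absurd hy.symm (by unfold pnode; split_ifs <;> simp [br, pyrC, e1])
  · exact absurd hy (by simp [e1, e2])
  · exact ⟨i, rfl⟩
  · exact absurd rfl hx.ne_e1
  · exact absurd hy (by simp [e1, e2])

lemma eq_br_of_thi_e2 (h : f2 ThiR x e2 ∈ River p t) (hx : Worldly p t x) : ∃ i, x = br i := by
  rcases of_thi_mem h with ⟨a, b, -, -, hy⟩ | ⟨_, _, -, -, -, -, -, hy⟩ | ⟨i, -, rfl, -⟩ |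
    ⟨-, hy⟩ | ⟨rfl, -⟩
  · exact absurd hy.symm (by unfold tnode; split_ifs <;> simp [br, thiC, e2])
  · exact absurd hy (by simp [e1, e2])
  · exact ⟨i, rfl⟩
  · exact absurd hy (by simp [e1, e2])
  · exact absurd rfl hx.ne_e2

lemma pyr_br_e2_notMem (i : ℕ) : f2 PyrR (br i) e2 ∉ River p t := fun h => by
  rcases of_pyr_mem h with ⟨a, b, -, -, hy⟩ | ⟨_, _, -, -, -, -, hx, -⟩ | ⟨_, -, -, hy⟩ |
    ⟨hx, -⟩ | ⟨hx, -⟩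
  · exact absurd hy.symm (by unfold pnode; split_ifs <;> simp [br, pyrC, e2])
  · exact pyrC_ne_br _ _ _ hx.symm
  · exact absurd hy (by simp [e1, e2])
  · exact absurd hx (by simp [br, e1])
  · exact absurd hx (by simp [br, e2])

lemma thi_br_e1_notMem (i : ℕ) : f2 ThiR (br i) e1 ∉ River p t := fun h => by
  rcases of_thi_mem h with ⟨a, b, -, -, hy⟩ | ⟨_, _, -, -, -, -, hx, -⟩ | ⟨_, -, -, hy⟩ |
    ⟨hx, -⟩ | ⟨hx, -⟩
  · exact absurd hy.symm (by unfold tnode; split_ifs <;> simp [br, thiC, e1])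
  · exact thiC_ne_br _ _ _ hx.symm
  · exact absurd hy (by simp [e1, e2])
  · exact absurd hx (by simp [br, e1])
  · exact absurd hx (by simp [br, e2])

lemma pyr_edge_mem {a b : ℕ} (h : PathIdx p a b) :
    f2 PyrR (pnode p a b) (pnode p a (b - 1)) ∈ River p t :=
  mem_iff.2 (Or.inl ⟨a, b, h, rfl⟩)

lemma thi_edge_mem {a b : ℕ} (h : PathIdx t a b) :
    f2 ThiR (tnode t a b) (tnode t a (b - 1)) ∈ River p t :=
  mem_iff.2 (Or.inr (Or.inl ⟨a, b, h, rfl⟩))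

lemma thiC_e1_mem {i j : ℕ} (hi : 1 ≤ i) (hi' : i ≤ t.length) (hj : 1 ≤ j)
    (hj' : j < t.getD (i - 1) 0) : f2 ThiR (thiC i j) e1 ∈ River p t :=
  mem_iff.2 (Or.inr (Or.inr (Or.inl ⟨i, j, hi, hi', hj, hj', rfl⟩)))

lemma pyrC_e2_mem {i j : ℕ} (hi : 1 ≤ i) (hi' : i ≤ p.length) (hj : 1 ≤ j)
    (hj' : j < p.getD (i - 1) 0) : f2 PyrR (pyrC i j) e2 ∈ River p t :=
  mem_iff.2 (Or.inr (Or.inr (Or.inr (Or.inl ⟨i, j, hi, hi', hj, hj', rfl⟩))))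

lemma br_thi_e2_mem {i : ℕ} (h : i ≤ p.length) : f2 ThiR (br i) e2 ∈ River p t :=
  mem_iff.2 (Or.inr (Or.inr (Or.inr (Or.inr (Or.inl ⟨i, h, Or.inl rfl⟩)))))

lemma br_pyr_e1_mem {i : ℕ} (h : i ≤ p.length) : f2 PyrR (br i) e1 ∈ River p t :=
  mem_iff.2 (Or.inr (Or.inr (Or.inr (Or.inr (Or.inl ⟨i, h, Or.inr rfl⟩)))))

lemma loop_mem {e : Term} (he : e = e1 ∨ e = e2) :
    f2 PyrR e e ∈ River p t ∧ f2 ThiR e e ∈ River p t ∧ f2 ChnR e e ∈ River p t := by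
  simp only [mem_iff]
  rcases he with rfl | rfl <;> simp

lemma chan_mem {a : Term} (h : Worldly p t a) : f2 ChnR chanC a ∈ River p t :=
  mem_iff.2 (Or.inr (Or.inr (Or.inr (Or.inr (Or.inr (Or.inr (Or.inl ⟨a, h, rfl⟩)))))))

lemma enc_mem : f2 EncR (br p.length) (br (p.length - 1)) ∈ River p t :=
  mem_iff.2 (Or.inr (Or.inr (Or.inr (Or.inr (Or.inr (Or.inr (Or.inr (Or.inl rfl))))))))

end River

/-! ### Myth walks -/

structure RiverShape (p t : List ℕ) : Prop where
  length_eq : p.length = t.length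
  one_le_length : 1 ≤ p.length
  pos_left : ∀ x ∈ p, 1 ≤ x
  pos_right : ∀ x ∈ t, 1 ≤ x

/-- The `ΣQ`-part of an infinite chain of M-facts `M(a k, a (k+1), c k, b (k+1), b k)`, as produced
by `T_myth` from an Encounter fact. -/
def MythWalk (I : Inst) (a b c : ℕ → Term) : Prop :=
  ∀ k, f2 PyrR (a k) (a (k + 1)) ∈ I ∧ f2 ThiR (b k) (b (k + 1)) ∈ I ∧
    f2 ChnR (c k) (a (k + 1)) ∈ I ∧ f2 ChnR (c k) (b (k + 1)) ∈ I

section Synchronised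

variable {p t : List ℕ} (hκ : RiverShape p t)
  (hsync : ∀ i, i + 1 < p.length → t.getD i 0 = p.getD (i + 1) 0)
include hκ hsync

lemma segSum_eq_of_synced (i : ℕ) :
    segSum t i (p.length - 1) = segSum p (i + 1) p.length := by
  have := hκ.one_le_length
  rw [segSum_shift (m := 0) (n := p.length) (fun x _ hx => hsync x hx) (Nat.zero_le i) (by omega),
    Nat.sub_add_cancel hκ.one_le_length]

lemma thiWalk_eq_br_of_pyrWalk_eq_br {k i : ℕ} (hk : k ≤ segSum t 0 (p.length - 1))
    (h : pathWalk p pyrC p.length k = br i) : pathWalk t thiC (p.length - 1) k = br (i - 1) := by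
  have hn := hκ.one_le_length
  have htotal := segSum_add_segSum (l := p) (Nat.zero_le 1) hn
  have h01 : segSum p 0 1 = p.getD 0 0 := by simp [segSum]
  have := one_le_getD hκ.pos_left hn
  rw [segSum_eq_of_synced hκ hsync 0, zero_add] at hk
  obtain ⟨hi, rfl⟩ := pathWalk_eq_br pyrC_ne_br le_rfl (by omega) h
  cases i with
  | zero => omega
  | succ i =>
    rw [Nat.add_sub_cancel, ← segSum_eq_of_synced hκ hsync]
    exact pathWalk_segSum hκ.pos_right (by omega) (by have := hκ.length_eq; omega)

lemma pyrWalk_eq_br_of_thiWalk_eq_br {k i : ℕ} (hk : k ≤ segSum t 0 (p.length - 1))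
    (h : pathWalk t thiC (p.length - 1) k = br i) : pathWalk p pyrC p.length k = br (i + 1) := by
  have := hκ.one_le_length
  obtain ⟨hi, rfl⟩ := pathWalk_eq_br thiC_ne_br (by have := hκ.length_eq; omega) hk h
  rw [segSum_eq_of_synced hκ hsync i]
  exact pathWalk_segSum hκ.pos_left (by omega) le_rfl

lemma mythWalk_river_step {a b c : ℕ → Term} (hw : MythWalk (River p t) a b c) {k : ℕ}
    (hk : k ≤ segSum t 0 (p.length - 1)) (ha : a k = pathWalk p pyrC p.length k)
    (hb : b k = pathWalk t thiC (p.length - 1) k) :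
    k < segSum t 0 (p.length - 1) ∧ a (k + 1) = pathWalk p pyrC p.length (k + 1) ∧
      b (k + 1) = pathWalk t thiC (p.length - 1) (k + 1) := by
  obtain ⟨hP, hT, hC1, hC2⟩ := hw k
  have hlen := hκ.length_eq
  rw [ha] at hP
  rw [hb] at hT
  rcases River.chn_pair hC1 hC2 with ⟨hwa, hwb⟩ | ⟨hea, heb⟩ | ⟨hea, heb⟩
  · obtain ⟨a', b', hab', hx', hy'⟩ := River.pyr_edge_of_worldly hP hwa
    obtain ⟨a'', b'', hab'', hx'', hy''⟩ := River.thi_edge_of_worldly hT hwb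
    have hlt : k < segSum t 0 (p.length - 1) := by
      -- otherwise the Thisbe walk sits at `b₀`, which has no worldly Thisbe successor
      by_contra hge
      have hbr : pathWalk t thiC (p.length - 1) k = br 0 := by
        rw [show k = segSum t 0 (p.length - 1) by omega]
        exact pathWalk_segSum hκ.pos_right (Nat.zero_le _) (by omega)
      obtain ⟨rfl, -⟩ := pathNode_eq_br thiC_ne_br hab'' (hx''.symm.trans hbr)
      exact absurd hab''.1 (by omega)
    have hle : segSum t 0 (p.length - 1) ≤ segSum p 0 p.length := by
      rw [segSum_eq_of_synced hκ hsync 0]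
      exact segSum_le_segSum (Nat.zero_le 1) le_rfl
    refine ⟨hlt, ?_, ?_⟩
    · rw [hy', pathWalk_succ_of_eq hκ.pos_left pyrC_ne_br pyrC_injective2 le_rfl (by omega)
        hab' hx']
      rfl
    · rw [hy'', pathWalk_succ_of_eq hκ.pos_right thiC_ne_br thiC_injective2 (by omega) hlt
        hab'' hx'']
      rfl
  · rw [hea] at hP
    rw [heb] at hT
    obtain ⟨i, hi⟩ := River.eq_br_of_pyr_e1 hP (worldly_pyrWalk le_rfl k)
    rw [thiWalk_eq_br_of_pyrWalk_eq_br hκ hsync hk hi] at hT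
    exact absurd hT (River.thi_br_e1_notMem _)
  · rw [hea] at hP
    rw [heb] at hT
    obtain ⟨i, hi⟩ := River.eq_br_of_thi_e2 hT (worldly_thiWalk hlen (by omega) k)
    rw [pyrWalk_eq_br_of_thiWalk_eq_br hκ hsync hk hi] at hP
    exact absurd hP (River.pyr_br_e2_notMem _)

theorem not_mythWalk_river_of_synced {a b c : ℕ → Term} (hw : MythWalk (River p t) a b c)
    (ha : a 0 = br p.length) (hb : b 0 = br (p.length - 1)) : False := by
  have hlen := hκ.length_eq
  have key : ∀ k, k ≤ segSum t 0 (p.length - 1) ∧ a k = pathWalk p pyrC p.length k ∧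
      b k = pathWalk t thiC (p.length - 1) k := by
    intro k
    induction k with
    | zero =>
      exact ⟨Nat.zero_le _, ha.trans (pathWalk_start hκ.pos_left le_rfl).symm,
        hb.trans (pathWalk_start hκ.pos_right (by omega)).symm⟩
    | succ k ih =>
      obtain ⟨hk, hak, hbk⟩ := ih
      obtain ⟨hlt, ha', hb'⟩ := mythWalk_river_step hκ hsync hw hk hak hbk
      exact ⟨hlt, ha', hb'⟩
  exact absurd (key (segSum t 0 (p.length - 1) + 1)).1 (by omega)

end Synchronised

lemma mythWalk_of_escape {I : Inst} {A B : ℕ → Term} {γ e : Term} {E : ℕ}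
    (hpath : ∀ k < E, f2 PyrR (A k) (A (k + 1)) ∈ I ∧ f2 ThiR (B k) (B (k + 1)) ∈ I ∧
      f2 ChnR γ (A (k + 1)) ∈ I ∧ f2 ChnR γ (B (k + 1)) ∈ I)
    (hA : f2 PyrR (A E) e ∈ I) (hB : f2 ThiR (B E) e ∈ I)
    (hloop : f2 PyrR e e ∈ I ∧ f2 ThiR e e ∈ I ∧ f2 ChnR e e ∈ I) :
    MythWalk I (fun k => if k ≤ E then A k else e) (fun k => if k ≤ E then B k else e)
      (fun k => if k < E then γ else e) := by
  intro k
  rcases lt_trichotomy k E with hk | rfl | hk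
  · simpa [hk.le, Nat.succ_le_of_lt hk, hk] using hpath k hk
  · simp only [le_refl, if_true, lt_irrefl, if_false, show ¬ k + 1 ≤ k by omega]
    exact ⟨hA, hB, hloop.2.2, hloop.2.2⟩
  · simp only [hk.not_ge, show ¬ k + 1 ≤ E by omega, hk.not_gt, if_false]
    exact ⟨hloop.1, hloop.2.1, hloop.2.2, hloop.2.2⟩

section Escape

variable {p t : List ℕ} (hκ : RiverShape p t)
include hκ

lemma River.pathWalk_step_mem {k : ℕ} (hkp : k < segSum p 0 p.length)
    (hkt : k < segSum t 0 (p.length - 1)) :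
    f2 PyrR (pathWalk p pyrC p.length k) (pathWalk p pyrC p.length (k + 1)) ∈ River p t ∧
    f2 ThiR (pathWalk t thiC (p.length - 1) k) (pathWalk t thiC (p.length - 1) (k + 1)) ∈
      River p t ∧
    f2 ChnR chanC (pathWalk p pyrC p.length (k + 1)) ∈ River p t ∧
    f2 ChnR chanC (pathWalk t thiC (p.length - 1) (k + 1)) ∈ River p t := by
  obtain ⟨hlen, hn, hp, ht⟩ := hκ
  obtain ⟨a, b, hab, h1, h2⟩ := pathWalk_edge (inner := pyrC) hp le_rfl hkp
  obtain ⟨a', b', hab', h1', h2'⟩ := pathWalk_edge (inner := thiC) ht (by omega) hkt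
  refine ⟨?_, ?_, River.chan_mem (worldly_pyrWalk le_rfl _),
    River.chan_mem (worldly_thiWalk hlen (by omega) _)⟩
  · rw [h1, h2]
    exact River.pyr_edge_mem hab
  · rw [h1', h2']
    exact River.thi_edge_mem hab'

lemma River.exists_mythWalk_of_escape {E : ℕ} {e : Term} (he : e = e1 ∨ e = e2)
    (hEp : E ≤ segSum p 0 p.length) (hEt : E ≤ segSum t 0 (p.length - 1))
    (hA : f2 PyrR (pathWalk p pyrC p.length E) e ∈ River p t)
    (hB : f2 ThiR (pathWalk t thiC (p.length - 1) E) e ∈ River p t) :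
    ∃ a b c, a 0 = br p.length ∧ b 0 = br (p.length - 1) ∧ MythWalk (River p t) a b c :=
  ⟨_, _, _, by simpa using pathWalk_start hκ.pos_left le_rfl,
    by simpa using pathWalk_start hκ.pos_right (by have := hκ.length_eq; omega),
    mythWalk_of_escape (A := pathWalk p pyrC p.length) (B := pathWalk t thiC (p.length - 1))
      (fun _ hk => River.pathWalk_step_mem hκ (by omega) (by omega)) hA hB (River.loop_mem he)⟩

theorem River.exists_mythWalk {m : ℕ} (hm : m + 1 < p.length)
    (hne : t.getD m 0 ≠ p.getD (m + 1) 0)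
    (hsync : ∀ i, m + 1 ≤ i → i + 1 < p.length → t.getD i 0 = p.getD (i + 1) 0) :
    ∃ a b c, a 0 = br p.length ∧ b 0 = br (p.length - 1) ∧ MythWalk (River p t) a b c := by
  have ⟨hlen, hn, hp, ht⟩ := hκ
  have hsum : segSum t (m + 1) (p.length - 1) = segSum p (m + 2) p.length := by
    rw [segSum_shift hsync le_rfl (by omega), Nat.sub_add_cancel hn]
  have htm := one_le_getD ht (show m < t.length by omega)
  have hpm := one_le_getD hp hm
  have ht_split : segSum t m (p.length - 1) = segSum t (m + 1) (p.length - 1) + t.getD m 0 := by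
    rw [← segSum_add_segSum (Nat.le_succ m) (by omega), segSum_succ le_rfl, segSum_self]
    ring
  have hp_split : segSum p (m + 1) p.length = segSum p (m + 2) p.length + p.getD (m + 1) 0 := by
    rw [← segSum_add_segSum (Nat.le_succ (m + 1)) hm, segSum_succ le_rfl, segSum_self]
    ring
  have htle : segSum t m (p.length - 1) ≤ segSum t 0 (p.length - 1) :=
    segSum_le_segSum (Nat.zero_le _) le_rfl
  have hple : segSum p (m + 1) p.length ≤ segSum p 0 p.length :=
    segSum_le_segSum (Nat.zero_le _) le_rfl
  rcases Nat.lt_or_gt_of_ne hne with hlt | hgt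
  · refine River.exists_mythWalk_of_escape hκ (E := segSum t m (p.length - 1))
      (Or.inr rfl) (by omega) htle ?_ ?_
    · rw [ht_split, hsum, pathWalk_segSum_add_of_lt (by omega) (by omega) hlt]
      exact River.pyrC_e2_mem (by omega) (by omega) (by omega)
        (by rw [show m + 2 - 1 = m + 1 by omega]; omega)
    · rw [pathWalk_segSum ht (by omega) (by omega)]
      exact River.br_thi_e2_mem (by omega)
  · refine River.exists_mythWalk_of_escape hκ (E := segSum p (m + 1) p.length)
      (Or.inl rfl) hple (by omega) ?_ ?_
    · rw [pathWalk_segSum hp hm.le le_rfl]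
      exact River.br_pyr_e1_mem hm.le
    · rw [hp_split, ← hsum, pathWalk_segSum_add_of_lt (by omega) (by omega) hgt]
      exact River.thiC_e1_mem (by omega) (by omega) (by omega) (by rw [Nat.add_sub_cancel]; omega)

end Escape

theorem River.exists_mythWalk_iff {p t : List ℕ} (hκ : RiverShape p t) :
    (∃ a b c, a 0 = br p.length ∧ b 0 = br (p.length - 1) ∧ MythWalk (River p t) a b c) ↔
      ∃ m, 1 ≤ m ∧ m < p.length ∧ t.getD (m - 1) 0 ≠ p.getD m 0 := by
  classical
  constructor
  · rintro ⟨a, b, c, ha, hb, hw⟩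
    by_contra! hsync
    exact not_mythWalk_river_of_synced hκ
      (fun i hi => by simpa using hsync (i + 1) (by omega) hi) hw ha hb
  · rintro ⟨m, hm1, hm, hne⟩
    set P : ℕ → Prop := fun m => 1 ≤ m ∧ m < p.length ∧ t.getD (m - 1) 0 ≠ p.getD m 0
    obtain ⟨hM1, hM, hMne⟩ : P (Nat.findGreatest P p.length) :=
      Nat.findGreatest_spec hm.le ⟨hm1, hm, hne⟩
    obtain ⟨M, hM'⟩ : ∃ M, Nat.findGreatest P p.length = M + 1 := ⟨_, (Nat.sub_add_cancel hM1).symm⟩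
    rw [hM'] at hM hMne
    refine River.exists_mythWalk hκ hM hMne fun i hi hin => ?_
    by_contra hne'
    exact Nat.findGreatest_is_greatest (P := P) (n := p.length) (k := i + 1) (by omega) (by omega)
      ⟨by omega, hin, by simpa using hne'⟩

/-! ### Chase sequences -/

section Chase

variable {T : List TGD} {I J K : Inst}

lemma ChaseStep.subset (h : ChaseStep T I J) : I ⊆ J := by
  obtain ⟨-, -, -, -, -, -, -, -, rfl⟩ := h
  exact Set.subset_union_left

lemma IsChaseSeq.monotone {f : ℕ → Inst} (hs : IsChaseSeq T I f) : Monotone f :=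
  monotone_nat_of_le_succ fun i => by
    rcases hs.2 i with hstep | ⟨-, heq⟩
    · exact hstep.subset
    · exact heq.ge

lemma exists_stage_of_forall_mem_iUnion {f : ℕ → Inst} (mono : Monotone f) {L : List Atom}
    {g : ℕ → Term} (h : ∀ a ∈ L, a.inst g ∈ ⋃ i, f i) : ∃ i, ∀ a ∈ L, a.inst g ∈ f i := by
  induction L with
  | nil => exact ⟨0, by simp⟩
  | cons a L ih =>
    obtain ⟨i, hi⟩ := Set.mem_iUnion.1 (h a List.mem_cons_self)
    obtain ⟨j, hj⟩ := ih fun a ha => h a (List.mem_cons_of_mem _ ha)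
    refine ⟨max i j, fun a' ha' => ?_⟩
    rcases List.mem_cons.1 ha' with rfl | ha'
    · exact mono (le_max_left i j) hi
    · exact mono (le_max_right i j) (hj a' ha')

lemma IsChaseResult.subset (h : IsChaseResult T I J) : I ⊆ J := by
  obtain ⟨f, hseq, -, rfl⟩ := h
  exact hseq.1 ▸ Set.subset_iUnion f 0

lemma TGD.exists_head_of_not_applicable {t : TGD} {g : ℕ → Term}
    (hbody : ∀ a ∈ t.body, a.inst g ∈ I) (h : ¬ t.Applicable I (t.frontier.map g)) :
    ∃ s : ℕ → Term, (∀ a ∈ t.head, a.inst s ∈ I) ∧ ∀ x ∈ t.frontier, s x = g x := by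
  rw [TGD.Applicable, not_and_or, not_not] at h
  rcases h with hnot | ⟨s, hs, hmap⟩
  · exact absurd ⟨g, hbody, rfl⟩ hnot
  · exact ⟨s, hs, List.map_eq_map_iff.1 hmap⟩

lemma IsChaseResult.isModel (h : IsChaseResult T I J) : IsModel J T := by
  obtain ⟨f, hseq, hfair, rfl⟩ := h
  have mono := hseq.monotone
  intro t ht g hg
  obtain ⟨i, hi⟩ := exists_stage_of_forall_mem_iUnion mono hg
  have lift : ∀ {j s}, (∀ a ∈ t.head, a.inst s ∈ f j) → ∀ a ∈ t.head, a.inst s ∈ ⋃ i, f i :=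
    fun hs a ha => Set.mem_iUnion.2 ⟨_, hs a ha⟩
  by_cases happ : t.Applicable (f i) (t.frontier.map g)
  · obtain ⟨j, hij, ⟨-, s, hmap, -, -, hres⟩ | hnapp⟩ := hfair i t ht _ happ
    · refine ⟨s, lift (j := j + 1) fun a ha => ?_, List.map_eq_map_iff.1 hmap⟩
      rw [hres]
      exact Or.inr ⟨a, ha, rfl⟩
    · obtain ⟨s, hs, hfr⟩ :=
        TGD.exists_head_of_not_applicable (fun a ha => mono hij (hi a ha)) hnapp
      exact ⟨s, lift hs, hfr⟩
  · obtain ⟨s, hs, hfr⟩ := TGD.exists_head_of_not_applicable hi happ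
    exact ⟨s, lift hs, hfr⟩

lemma chase_isChaseResult (h : ∃ J, IsChaseResult T I J) : IsChaseResult T I (chase T I) := by
  unfold chase
  rw [dif_pos h]
  exact h.choose_spec

lemma adom_mono {I J : Inst} (h : I ⊆ J) : adom I ⊆ adom J :=
  fun _ ⟨F, hF, hx⟩ => ⟨F, h hF, hx⟩

lemma Fct.map_congr {F : Fct} {h h' : Term → Term} (hh : ∀ x ∈ F.args, h x = h' x) :
    F.map h = F.map h' := by
  simp only [Fct.map, List.map_congr_left hh]

lemma ChaseStep.exists_hom_extension (hfr : ∀ tg ∈ T, ∀ x ∈ tg.frontier, x ∈ tg.bodyVars)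
    (hK : IsModel K T) (hstep : ChaseStep T I J) {h : Term → Term} (hdb : DBPres h)
    (hh : IsFullHom h I K) :
    ∃ h', DBPres h' ∧ IsFullHom h' J K ∧ ∀ x ∈ adom I, h' x = h x := by
  classical
  obtain ⟨tg, htg, c, ⟨⟨g, hgbody, hgc⟩, -⟩, s, hsc, hfresh, hinj, rfl⟩ := hstep
  obtain ⟨w, hwhead, hwfr⟩ := hK tg htg (h ∘ g) fun a ha => by
    simpa [Atom.inst, Fct.map, List.map_map] using hh _ (hgbody a ha)
  have hsg : ∀ x ∈ tg.frontier, s x = g x := List.map_eq_map_iff.1 (hsc.trans hgc.symm)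
  set New : Term → Prop := fun u => ∃ y, y ∈ tg.headVars ∧ y ∉ tg.frontier ∧ s y = u
  have not_new : ∀ u, (u.isConst ∨ u ∈ adom I) → ¬ New u := by
    rintro u hu ⟨y, hy, hyf, rfl⟩
    have := hfresh y hy hyf
    tauto
  let h' : Term → Term := fun u => if hu : New u then w hu.choose else h u
  have h'_old : ∀ u, ¬ New u → h' u = h u := fun u hu => dif_neg hu
  have h'_head : ∀ y ∈ tg.headVars, h' (s y) = w y := by
    intro y hy
    by_cases hyf : y ∈ tg.frontier
    · obtain ⟨a, ha, hya⟩ := hfr tg htg y hyf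
      have hgy : g y ∈ adom I := ⟨a.inst g, hgbody a ha, List.mem_map_of_mem hya⟩
      rw [hsg y hyf, h'_old _ (not_new _ (Or.inr hgy)), hwfr y hyf]
      rfl
    · have hnew : New (s y) := ⟨y, hy, hyf, rfl⟩
      obtain ⟨hy', hyf', hsy⟩ := hnew.choose_spec
      change (if hu : New (s y) then w hu.choose else h (s y)) = w y
      rw [dif_pos hnew, hinj _ _ hy' hy hyf' hyf hsy]
  refine ⟨h', fun n => (h'_old _ (not_new (.const n) (Or.inl trivial))).trans (hdb n), ?_,
    fun x hx => h'_old _ (not_new _ (Or.inr hx))⟩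
  rintro F (hF | ⟨a, ha, rfl⟩)
  · rw [Fct.map_congr fun x hx => h'_old x (not_new x (Or.inr ⟨F, hF, hx⟩))]
    exact hh F hF
  · have : (a.inst s).map h' = a.inst w := by
      simp only [Atom.inst, Fct.map, List.map_map, Fct.mk.injEq, true_and]
      exact List.map_congr_left fun y hy => h'_head y ⟨a, ha, hy⟩
    rw [this]
    exact hwhead a ha

lemma exists_hom_iUnion {f : ℕ → Inst} (mono : Monotone f) {H : ℕ → Term → Term}
    (hH : ∀ i, DBPres (H i) ∧ IsFullHom (H i) (f i) K)
    (hcompat : ∀ i, ∀ x ∈ adom (f i), H (i + 1) x = H i x) :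
    ∃ H', DBPres H' ∧ IsFullHom H' (⋃ i, f i) K := by
  classical
  have stable : ∀ i j, i ≤ j → ∀ x ∈ adom (f i), H j x = H i x := by
    intro i j hij x hx
    induction j, hij using Nat.le_induction with
    | base => rfl
    | succ j hij ih => rw [hcompat j x (adom_mono (mono hij) hx), ih]
  refine ⟨fun u => if hu : ∃ i, u ∈ adom (f i) then H (Nat.find hu) u else u, fun n => ?_, ?_⟩
  · dsimp only
    split_ifs
    · exact (hH _).1 n
    · rfl
  · intro F hF
    obtain ⟨i, hFi⟩ := Set.mem_iUnion.1 hF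
    rw [Fct.map_congr (h' := H i) fun x hx => ?_]
    · exact (hH i).2 F hFi
    · have hu : ∃ j, x ∈ adom (f j) := ⟨i, F, hFi, hx⟩
      rw [dif_pos hu]
      exact (stable _ i (Nat.find_min' hu ⟨F, hFi, hx⟩) x (Nat.find_spec hu)).symm

theorem IsChaseResult.exists_hom (hfr : ∀ tg ∈ T, ∀ x ∈ tg.frontier, x ∈ tg.bodyVars)
    (hIK : I ⊆ K) (hK : IsModel K T) (hJ : IsChaseResult T I J) :
    ∃ H, DBPres H ∧ IsFullHom H J K := by
  obtain ⟨f, hseq, -, rfl⟩ := hJ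
  have ext : ∀ i (h : Term → Term), ∃ h', DBPres h ∧ IsFullHom h (f i) K →
      DBPres h' ∧ IsFullHom h' (f (i + 1)) K ∧ ∀ x ∈ adom (f i), h' x = h x := by
    intro i h
    by_cases hh : DBPres h ∧ IsFullHom h (f i) K
    · rcases hseq.2 i with hstep | ⟨-, heq⟩
      · obtain ⟨h', hh'⟩ := hstep.exists_hom_extension hfr hK hh.1 hh.2
        exact ⟨h', fun _ => hh'⟩
      · exact ⟨h, fun hh => ⟨hh.1, heq ▸ hh.2, fun _ _ => rfl⟩⟩
    · exact ⟨h, fun hh' => absurd hh' hh⟩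
  choose ext hext using ext
  let H : ℕ → Term → Term := fun i => Nat.rec id (fun i h => ext i h) i
  have hH : ∀ i, DBPres (H i) ∧ IsFullHom (H i) (f i) K := by
    intro i
    induction i with
    | zero => exact ⟨fun _ => rfl, fun F hF => by simpa [H, Fct.map] using hIK (hseq.1 ▸ hF)⟩
    | succ i ih => exact ⟨(hext i (H i) ih).1, (hext i (H i) ih).2.1⟩
  exact exists_hom_iUnion hseq.monotone hH fun i => (hext i (H i) (hH i)).2.2

end Chase

/-! ### `T_myth` -/

def TGD.SatisfiesInto (I I' : Inst) (t : TGD) : Prop :=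
  ∀ g : ℕ → Term, (∀ a ∈ t.body, a.inst g ∈ I) →
    ∃ h : ℕ → Term, (∀ a ∈ t.head, a.inst h ∈ I') ∧ ∀ x ∈ t.frontier, h x = g x

lemma TGD.not_applicable_of_satisfiesInto {t : TGD} {I I' : Inst} {c : List Term}
    (hsat : t.SatisfiesInto I I') (happ : t.Applicable I c) : ¬ t.Applicable I' c := by
  obtain ⟨⟨g, hg, rfl⟩, -⟩ := happ
  obtain ⟨h, hh, hfr⟩ := hsat g hg
  exact fun ⟨_, hn⟩ => hn ⟨h, hh, List.map_congr_left hfr⟩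

def tgdEnc : TGD := ⟨[⟨EncR, [0, 1]⟩], [⟨MR, [0, 2, 3, 4, 1]⟩], [0, 1]⟩

def tgdSucc : TGD := ⟨[⟨MR, [0, 1, 2, 3, 4]⟩], [⟨MR, [1, 5, 6, 7, 3]⟩], [1, 3]⟩

def tgdProj : TGD :=
  ⟨[⟨MR, [0, 1, 2, 3, 4]⟩],
    [⟨PyrR, [0, 1]⟩, ⟨ThiR, [4, 3]⟩, ⟨ChnR, [2, 1]⟩, ⟨ChnR, [2, 3]⟩], [0, 1, 2, 3, 4]⟩

lemma Tmyth_eq : Tmyth = [tgdEnc, tgdSucc, tgdProj] := rfl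

def mfact (u u' c v' v : Term) : Fct := ⟨MR, [u, u', c, v', v]⟩

lemma mfact_inj {u₁ u₁' c₁ v₁' v₁ u₂ u₂' c₂ v₂' v₂ : Term} :
    mfact u₁ u₁' c₁ v₁' v₁ = mfact u₂ u₂' c₂ v₂' v₂ ↔
      u₁ = u₂ ∧ u₁' = u₂' ∧ c₁ = c₂ ∧ v₁' = v₂' ∧ v₁ = v₂ := by
  simp [mfact]

section Satisfaction

variable {I J : Inst}

lemma satisfiesInto_tgdEnc_iff : TGD.SatisfiesInto I J tgdEnc ↔
    ∀ x y, f2 EncR x y ∈ I → ∃ u' c v', mfact x u' c v' y ∈ J := by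
  constructor
  · intro h x y hxy
    obtain ⟨s, hs, hfr⟩ := h (fun i => [x, y].getD i x) (by simpa [tgdEnc, Atom.inst, f2] using hxy)
    have h0 : s 0 = x := hfr 0 (by simp [tgdEnc])
    have h1 : s 1 = y := hfr 1 (by simp [tgdEnc])
    refine ⟨s 2, s 3, s 4, ?_⟩
    simpa [tgdEnc, Atom.inst, mfact, h0, h1] using hs
  · intro h g hg
    obtain ⟨u', c, v', hm⟩ := h (g 0) (g 1) (by simpa [tgdEnc, Atom.inst, f2] using hg)
    refine ⟨fun i => [g 0, g 1, u', c, v'].getD i (g 0), ?_, ?_⟩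
    · simpa [tgdEnc, Atom.inst, mfact] using hm
    · simp [tgdEnc]

lemma satisfiesInto_tgdSucc_iff : TGD.SatisfiesInto I J tgdSucc ↔
    ∀ u u' c v' v, mfact u u' c v' v ∈ I → ∃ u'' c' v'', mfact u' u'' c' v'' v' ∈ J := by
  constructor
  · intro h u u' c v' v hm
    obtain ⟨s, hs, hfr⟩ := h (fun i => [u, u', c, v', v].getD i u)
      (by simpa [tgdSucc, Atom.inst, mfact] using hm)
    have h1 : s 1 = u' := hfr 1 (by simp [tgdSucc])
    have h3 : s 3 = v' := hfr 3 (by simp [tgdSucc])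
    refine ⟨s 5, s 6, s 7, ?_⟩
    simpa [tgdSucc, Atom.inst, mfact, h1, h3] using hs
  · intro h g hg
    obtain ⟨u'', c', v'', hm⟩ := h (g 0) (g 1) (g 2) (g 3) (g 4)
      (by simpa [tgdSucc, Atom.inst, mfact] using hg)
    refine ⟨fun i => [g 0, g 1, g 2, g 3, g 4, u'', c', v''].getD i (g 0), ?_, ?_⟩
    · simpa [tgdSucc, Atom.inst, mfact] using hm
    · simp [tgdSucc]

lemma satisfiesInto_tgdProj_iff : TGD.SatisfiesInto I J tgdProj ↔
    ∀ u u' c v' v, mfact u u' c v' v ∈ I → f2 PyrR u u' ∈ J ∧ f2 ThiR v v' ∈ J ∧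
      f2 ChnR c u' ∈ J ∧ f2 ChnR c v' ∈ J := by
  constructor
  · intro h u u' c v' v hm
    obtain ⟨s, hs, hfr⟩ := h (fun i => [u, u', c, v', v].getD i u)
      (by simpa [tgdProj, Atom.inst, mfact] using hm)
    have hs' : ∀ i < 5, s i = [u, u', c, v', v].getD i u := fun i hi =>
      hfr i (by simp [tgdProj]; omega)
    simpa [tgdProj, Atom.inst, f2, hs' 0, hs' 1, hs' 2, hs' 3, hs' 4] using hs
  · intro h g hg
    have := h (g 0) (g 1) (g 2) (g 3) (g 4) (by simpa [tgdProj, Atom.inst, mfact] using hg)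
    exact ⟨g, by simpa [tgdProj, Atom.inst, f2] using this, fun _ _ => rfl⟩

lemma isModel_Tmyth_iff : IsModel J Tmyth ↔
    TGD.SatisfiesInto J J tgdEnc ∧ TGD.SatisfiesInto J J tgdSucc ∧
      TGD.SatisfiesInto J J tgdProj := by
  simp [IsModel, Tmyth_eq, TGD.SatisfiesInto, TGD.Satisfies]

end Satisfaction

lemma exists_mchain {J : Inst}
    (hsucc : ∀ u u' c v' v, mfact u u' c v' v ∈ J → ∃ u'' c' v'', mfact u' u'' c' v'' v' ∈ J)
    {u u' c v' v : Term} (h : mfact u u' c v' v ∈ J) :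
    ∃ a b γ : ℕ → Term, a 0 = u ∧ b 0 = v ∧
      ∀ k, mfact (a k) (a (k + 1)) (γ k) (b (k + 1)) (b k) ∈ J := by
  let Q := {q : Term × Term × Term × Term × Term //
    mfact q.1 q.2.1 q.2.2.1 q.2.2.2.1 q.2.2.2.2 ∈ J}
  have step : ∀ q : Q, ∃ q' : Q, q'.1.1 = q.1.2.1 ∧ q'.1.2.2.2.2 = q.1.2.2.2.1 := by
    rintro ⟨⟨u, u', c, v', v⟩, hq⟩
    obtain ⟨u'', c', v'', hq'⟩ := hsucc u u' c v' v hq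
    exact ⟨⟨(u', u'', c', v'', v'), hq'⟩, rfl, rfl⟩
  choose F hF using step
  let q : ℕ → Q := fun k => F^[k] ⟨(u, u', c, v', v), h⟩
  have hq : ∀ k, q (k + 1) = F (q k) := fun k => Function.iterate_succ_apply' F k _
  refine ⟨fun k => (q k).1.1, fun k => (q k).1.2.2.2.2, fun k => (q k).1.2.2.1, rfl, rfl,
    fun k => ?_⟩
  dsimp only
  rw [hq, (hF _).1, (hF _).2]
  exact (q k).2

theorem exists_mythWalk_of_isModel {J : Inst} (hJ : IsModel J Tmyth) {x y : Term}
    (hxy : f2 EncR x y ∈ J) : ∃ a b c, a 0 = x ∧ b 0 = y ∧ MythWalk J a b c := by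
  obtain ⟨hE, hS, hP⟩ := isModel_Tmyth_iff.1 hJ
  obtain ⟨u', c, v', h0⟩ := satisfiesInto_tgdEnc_iff.1 hE x y hxy
  obtain ⟨a, b, γ, ha, hb, hchain⟩ := exists_mchain (satisfiesInto_tgdSucc_iff.1 hS) h0
  exact ⟨a, b, γ, ha, hb, fun k => satisfiesInto_tgdProj_iff.1 hP _ _ _ _ _ (hchain k)⟩

lemma MythWalk.map {J K : Inst} {a b c : ℕ → Term} (hw : MythWalk J a b c) {h : Term → Term}
    (hh : IsHomOn SQmyth h J K) : MythWalk K (h ∘ a) (h ∘ b) (h ∘ c) := fun k => by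
  obtain ⟨h1, h2, h3, h4⟩ := hw k
  exact ⟨hh _ h1 (by simp [SQmyth, f2]), hh _ h2 (by simp [SQmyth, f2]),
    hh _ h3 (by simp [SQmyth, f2]), hh _ h4 (by simp [SQmyth, f2])⟩

def mchain (a b c : ℕ → Term) : Inst :=
  Set.range fun k => mfact (a k) (a (k + 1)) (c k) (b (k + 1)) (b k)

lemma isModel_union_mchain {I : Inst} {a b c : ℕ → Term} (hw : MythWalk I a b c)
    (hEnc : ∀ x y, f2 EncR x y ∈ I → x = a 0 ∧ y = b 0) (hM : ∀ F ∈ I, F.rel ≠ MR) :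
    IsModel (I ∪ mchain a b c) Tmyth := by
  have hmem : ∀ {u u' γ v' v}, mfact u u' γ v' v ∈ I ∪ mchain a b c →
      ∃ k, u = a k ∧ u' = a (k + 1) ∧ γ = c k ∧ v' = b (k + 1) ∧ v = b k := by
    rintro u u' γ v' v (h | ⟨k, hk⟩)
    · exact absurd rfl (hM _ h)
    · exact ⟨k, mfact_inj.1 hk.symm⟩
  refine isModel_Tmyth_iff.2 ⟨satisfiesInto_tgdEnc_iff.2 ?_, satisfiesInto_tgdSucc_iff.2 ?_,
    satisfiesInto_tgdProj_iff.2 ?_⟩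
  · rintro x y (h | ⟨k, hk⟩)
    · obtain ⟨rfl, rfl⟩ := hEnc x y h
      exact ⟨_, _, _, Or.inr ⟨0, rfl⟩⟩
    · exact absurd (congrArg Fct.rel hk) (by simp [mfact, f2, MR, EncR])
  · intro u u' γ v' v h
    obtain ⟨k, -, rfl, -, rfl, -⟩ := hmem h
    exact ⟨_, _, _, Or.inr ⟨k + 1, rfl⟩⟩
  · intro u u' γ v' v h
    obtain ⟨k, rfl, rfl, rfl, rfl, rfl⟩ := hmem h
    obtain ⟨h1, h2, h3, h4⟩ := hw k
    exact ⟨Or.inl h1, Or.inl h2, Or.inl h3, Or.inl h4⟩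

lemma Tmyth_frontier_subset_bodyVars : ∀ tg ∈ Tmyth, ∀ x ∈ tg.frontier, x ∈ tg.bodyVars := by
  simp only [Tmyth_eq, List.mem_cons, List.not_mem_nil, or_false]
  rintro tg (rfl | rfl | rfl) x hx <;>
    simp only [tgdEnc, tgdSucc, tgdProj, List.mem_cons, List.not_mem_nil, or_false] at hx <;>
    exact ⟨_, List.mem_singleton_self _, by simp; omega⟩

lemma DBPres.apply_of_isConst {h : Term → Term} (hdb : DBPres h) {x : Term} (hx : x.isConst) :
    h x = x := by
  cases x with
  | const n => exact hdb n
  | null n => exact absurd hx id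

theorem homTo_chase_Tmyth_iff {I : Inst} {x y : Term} (hx : x.isConst) (hy : y.isConst)
    (hxy : f2 EncR x y ∈ I) (hEnc : ∀ x' y', f2 EncR x' y' ∈ I → x' = x ∧ y' = y)
    (hM : ∀ F ∈ I, F.rel ≠ MR) (hchase : IsChaseResult Tmyth I (chase Tmyth I)) :
    HomTo SQmyth (chase Tmyth I) I ↔ ∃ a b c, a 0 = x ∧ b 0 = y ∧ MythWalk I a b c := by
  constructor
  · rintro ⟨h, hdb, hh⟩
    obtain ⟨a, b, c, rfl, rfl, hw⟩ := exists_mythWalk_of_isModel hchase.isModel (hchase.subset hxy)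
    exact ⟨h ∘ a, h ∘ b, h ∘ c, hdb.apply_of_isConst hx, hdb.apply_of_isConst hy, hw.map hh⟩
  · rintro ⟨a, b, c, rfl, rfl, hw⟩
    obtain ⟨H, hdb, hH⟩ := hchase.exists_hom Tmyth_frontier_subset_bodyVars
      Set.subset_union_left (isModel_union_mchain hw hEnc hM)
    refine ⟨H, hdb, fun F hF hS => ?_⟩
    rcases hH F hF with hI | ⟨k, hk⟩
    · exact hI
    · have hrel : F.rel = MR := congrArg Fct.rel hk.symm
      simp [hrel, SQmyth, MR, PyrR, ThiR, ChnR, EncR, MouthR] at hS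

/-! ### A fair chase sequence for `T_myth` -/

lemma TGD.stepResult_of_fresh {t : TGD} {S : Inst} {h : ℕ → Term} {N o : ℕ}
    (hvars : ∀ z ∈ t.headVars, z ∉ t.frontier → o ≤ z ∧ h z = .null (N + (z - o)))
    (hS : ∀ j, Term.null j ∈ adom S → j < N) :
    t.StepResult S (t.frontier.map h) (S ∪ {F | ∃ a ∈ t.head, F = a.inst h}) := by
  refine ⟨h, rfl, fun z hz hzf => ?_, fun z z' hz hz' hzf hzf' hzz' => ?_, rfl⟩
  · obtain ⟨-, hhz⟩ := hvars z hz hzf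
    rw [hhz]
    exact ⟨id, fun hmem => absurd (hS _ hmem) (by omega)⟩
  · obtain ⟨hoz, hhz⟩ := hvars z hz hzf
    obtain ⟨hoz', hhz'⟩ := hvars z' hz' hzf'
    rw [hhz, hhz', Term.null.injEq] at hzz'
    omega

def freshU (x : Term) : ℕ → Term
  | 0 => x
  | k + 1 => .null (3 * k)

def freshV (y : Term) : ℕ → Term
  | 0 => y
  | k + 1 => .null (3 * k + 2)

def freshC (k : ℕ) : Term := .null (3 * k + 1)

def chaseM (x y : Term) (k : ℕ) : Fct :=
  mfact (freshU x k) (freshU x (k + 1)) (freshC k) (freshV y (k + 1)) (freshV y k)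

def chaseProj (x y : Term) (k : ℕ) : Set Fct :=
  {f2 PyrR (freshU x k) (freshU x (k + 1)), f2 ThiR (freshV y k) (freshV y (k + 1)),
    f2 ChnR (freshC k) (freshU x (k + 1)), f2 ChnR (freshC k) (freshV y (k + 1))}

/-- Stage `2k + 1` adds the `k`-th M-fact (by `tgdEnc` for `k = 0`, by `tgdSucc` afterwards)
with the nulls `3k`, `3k + 1`, `3k + 2`; stage `2k + 2` adds its projection by `tgdProj`.
Some fair chase sequence has to be exhibited, since otherwise `chase` is the junk value `I`. -/
def chaseStage (I : Inst) (x y : Term) (n : ℕ) : Inst :=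
  I ∪ {F | ∃ k, 2 * k < n ∧ F = chaseM x y k} ∪ {F | ∃ k, 2 * k + 1 < n ∧ F ∈ chaseProj x y k}

section ChaseStage

variable {I : Inst} {x y : Term}

lemma chaseStage_zero : chaseStage I x y 0 = I := by
  ext F
  simp [chaseStage]

lemma chaseStage_mono : Monotone (chaseStage I x y) := by
  intro m n hmn F
  rintro ((h | ⟨k, hk, h⟩) | ⟨k, hk, h⟩)
  · exact Or.inl (Or.inl h)
  · exact Or.inl (Or.inr ⟨k, by omega, h⟩)
  · exact Or.inr ⟨k, by omega, h⟩

lemma chaseStage_two_mul_add_one (k : ℕ) :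
    chaseStage I x y (2 * k + 1) = chaseStage I x y (2 * k) ∪ {chaseM x y k} := by
  refine subset_antisymm ?_ (Set.union_subset (chaseStage_mono (by omega)) ?_)
  · rintro F ((h | ⟨j, hj, rfl⟩) | ⟨j, hj, h⟩)
    · exact Or.inl (Or.inl (Or.inl h))
    · rcases Nat.lt_or_ge j k with hjk | hjk
      · exact Or.inl (Or.inl (Or.inr ⟨j, by omega, rfl⟩))
      · exact Or.inr (by rw [show j = k by omega]; rfl)
    · exact Or.inl (Or.inr ⟨j, by omega, h⟩)
  · rintro F rfl
    exact Or.inl (Or.inr ⟨k, by omega, rfl⟩)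

lemma chaseStage_two_mul_add_two (k : ℕ) :
    chaseStage I x y (2 * k + 2) = chaseStage I x y (2 * k + 1) ∪ chaseProj x y k := by
  refine subset_antisymm ?_ (Set.union_subset (chaseStage_mono (by omega)) ?_)
  · rintro F ((h | ⟨j, hj, h⟩) | ⟨j, hj, h⟩)
    · exact Or.inl (Or.inl (Or.inl h))
    · exact Or.inl (Or.inl (Or.inr ⟨j, by omega, h⟩))
    · rcases Nat.lt_or_ge j k with hjk | hjk
      · exact Or.inl (Or.inr ⟨j, by omega, h⟩)
      · exact Or.inr (by rwa [show j = k by omega] at h)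
  · intro F hF
    exact Or.inr ⟨k, by omega, hF⟩

lemma freshU_eq_null (hx : x.isConst) {k j : ℕ} (h : freshU x k = .null j) : j + 3 ≤ 3 * k := by
  cases k with
  | zero => exact absurd (h ▸ hx : (Term.null j).isConst) id
  | succ k => simp only [freshU, Term.null.injEq] at h; omega

lemma freshV_eq_null (hy : y.isConst) {k j : ℕ} (h : freshV y k = .null j) : j + 1 ≤ 3 * k := by
  cases k with
  | zero => exact absurd (h ▸ hy : (Term.null j).isConst) id
  | succ k => simp only [freshV, Term.null.injEq] at h; omega

lemma null_mem_chaseM_args (hx : x.isConst) (hy : y.isConst) {k j : ℕ}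
    (h : Term.null j ∈ (chaseM x y k).args) : j < 3 * k + 3 := by
  simp only [chaseM, mfact, List.mem_cons, List.not_mem_nil, or_false] at h
  rcases h with h | h | h | h | h
  · have := freshU_eq_null hx h.symm; omega
  · have := freshU_eq_null hx h.symm; omega
  · simp only [freshC, Term.null.injEq] at h; omega
  · have := freshV_eq_null hy h.symm; omega
  · have := freshV_eq_null hy h.symm; omega

lemma mem_chaseM_args_of_mem_chaseProj {k : ℕ} {F : Fct} (hF : F ∈ chaseProj x y k) {z : Term}
    (hz : z ∈ F.args) : z ∈ (chaseM x y k).args := by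
  rcases hF with rfl | rfl | rfl | rfl <;> simp only [f2, List.mem_cons, List.not_mem_nil,
    or_false] at hz <;> rcases hz with rfl | rfl <;> simp [chaseM, mfact]

lemma null_mem_adom_chaseStage (hconst : ∀ F ∈ I, ∀ z ∈ F.args, z.isConst) (hx : x.isConst)
    (hy : y.isConst) {n j : ℕ} (h : Term.null j ∈ adom (chaseStage I x y n)) :
    ∃ k, 2 * k < n ∧ j < 3 * k + 3 := by
  obtain ⟨F, (hI | ⟨k, hk, rfl⟩) | ⟨k, hk, hF⟩, hjF⟩ := h
  · exact absurd (hconst F hI _ hjF) id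
  · exact ⟨k, hk, null_mem_chaseM_args hx hy hjF⟩
  · exact ⟨k, by omega, null_mem_chaseM_args hx hy (mem_chaseM_args_of_mem_chaseProj hF hjF)⟩

lemma mfact_mem_chaseStage (hM : ∀ F ∈ I, F.rel ≠ MR) {n : ℕ} {u u' c v' v : Term}
    (h : mfact u u' c v' v ∈ chaseStage I x y n) :
    ∃ k, 2 * k < n ∧ mfact u u' c v' v = chaseM x y k := by
  rcases h with (hI | ⟨k, hk, he⟩) | ⟨k, -, hF⟩
  · exact absurd rfl (hM _ hI)
  · exact ⟨k, hk, he⟩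
  · rcases hF with he | he | he | he <;> simp [mfact, f2, MR, PyrR, ThiR, ChnR] at he

lemma enc_mem_chaseStage (hEnc : ∀ x' y', f2 EncR x' y' ∈ I → x' = x ∧ y' = y) {n : ℕ}
    {u v : Term} (h : f2 EncR u v ∈ chaseStage I x y n) : u = x ∧ v = y := by
  rcases h with (hI | ⟨k, -, he⟩) | ⟨k, -, hF⟩
  · exact hEnc u v hI
  · simp [chaseM, mfact, f2, MR, EncR] at he
  · rcases hF with he | he | he | he <;> simp [f2, EncR, PyrR, ThiR, ChnR] at he

lemma pyr_notMem_chaseStage (hconst : ∀ F ∈ I, ∀ z ∈ F.args, z.isConst) (k : ℕ) :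
    f2 PyrR (freshU x k) (freshU x (k + 1)) ∉ chaseStage I x y (2 * k + 1) := by
  rintro ((hI | ⟨j, -, he⟩) | ⟨j, hj, hF⟩)
  · exact hconst _ hI (freshU x (k + 1)) (by simp [f2])
  · simp [chaseM, mfact, f2, MR, PyrR] at he
  · rcases hF with he | he | he | he <;> simp [f2, freshU, PyrR, ThiR, ChnR] at he
    omega

lemma chaseM_mem_chaseStage {k n : ℕ} (h : 2 * k < n) : chaseM x y k ∈ chaseStage I x y n :=
  Or.inl (Or.inr ⟨k, h, rfl⟩)

lemma chaseProj_subset_chaseStage {k n : ℕ} (h : 2 * k + 1 < n) :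
    chaseProj x y k ⊆ chaseStage I x y n :=
  fun _ hF => Or.inr ⟨k, h, hF⟩

lemma freshU_injective (hx : x.isConst) : Function.Injective (freshU x) := by
  intro j j' h
  cases j <;> cases j' <;> simp only [freshU, Term.null.injEq] at h
  · rfl
  · exact absurd (h ▸ hx : (Term.null _).isConst) id
  · exact absurd (h ▸ hx : (Term.null _).isConst) id
  · omega

end ChaseStage

lemma tgdEnc_headVars {z : ℕ} (hz : z ∈ tgdEnc.headVars) (hzf : z ∉ tgdEnc.frontier) :
    z = 2 ∨ z = 3 ∨ z = 4 := by
  obtain ⟨a, ha, hza⟩ := hz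
  simp only [tgdEnc, List.mem_singleton] at ha hzf
  subst ha
  simp at hza hzf
  omega

lemma tgdSucc_headVars {z : ℕ} (hz : z ∈ tgdSucc.headVars) (hzf : z ∉ tgdSucc.frontier) :
    z = 5 ∨ z = 6 ∨ z = 7 := by
  obtain ⟨a, ha, hza⟩ := hz
  simp only [tgdSucc, List.mem_singleton] at ha hzf
  subst ha
  simp at hza hzf
  omega

lemma tgdProj_headVars {z : ℕ} (hz : z ∈ tgdProj.headVars) : z ∈ tgdProj.frontier := by
  obtain ⟨a, ha, hza⟩ := hz
  simp only [tgdProj, List.mem_cons, List.not_mem_nil, or_false] at ha ⊢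
  rcases ha with rfl | rfl | rfl | rfl <;> simp at hza <;> omega

section ChaseSteps

variable {I : Inst} {x y : Term} (hconst : ∀ F ∈ I, ∀ z ∈ F.args, z.isConst)
  (hxy : f2 EncR x y ∈ I)
include hconst hxy

lemma chaseStep_chaseStage_zero (hM : ∀ F ∈ I, F.rel ≠ MR) :
    ChaseStep Tmyth (chaseStage I x y 0) (chaseStage I x y 1) := by
  let h : ℕ → Term := fun i => [x, y, .null 0, .null 1, .null 2].getD i x
  refine ⟨tgdEnc, by simp [Tmyth_eq], tgdEnc.frontier.map h,
    ⟨⟨fun i => [x, y].getD i x, by simpa [chaseStage_zero, tgdEnc, Atom.inst, f2] using hxy,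
      rfl⟩, ?_⟩, ?_⟩
  · rintro ⟨s, hs, -⟩
    have hmem := hs _ (List.mem_singleton_self _)
    rw [chaseStage_zero] at hmem
    exact hM _ hmem rfl
  · have hstep := TGD.stepResult_of_fresh (t := tgdEnc) (S := chaseStage I x y 0) (h := h)
      (N := 0) (o := 2)
      (fun z hz hzf => by rcases tgdEnc_headVars hz hzf with rfl | rfl | rfl <;> simp [h])
      (fun j ⟨F, hF, hjF⟩ => absurd (hconst F (by rwa [chaseStage_zero] at hF) _ hjF) id)
    convert hstep using 1
    rw [chaseStage_two_mul_add_one (k := 0)]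
    congr 1
    ext F
    simp [tgdEnc, Atom.inst, chaseM, mfact, freshU, freshV, freshC, h]

lemma chaseStep_chaseStage_succ (hM : ∀ F ∈ I, F.rel ≠ MR) (k : ℕ) :
    ChaseStep Tmyth (chaseStage I x y (2 * k + 2)) (chaseStage I x y (2 * k + 3)) := by
  have hx : x.isConst := hconst _ hxy x (by simp [f2])
  have hy : y.isConst := hconst _ hxy y (by simp [f2])
  let h : ℕ → Term := fun i => [freshU x k, freshU x (k + 1), freshC k, freshV y (k + 1),
    freshV y k, .null (3 * (k + 1)), .null (3 * (k + 1) + 1), .null (3 * (k + 1) + 2)].getD i x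
  refine ⟨tgdSucc, by simp [Tmyth_eq], tgdSucc.frontier.map h, ⟨⟨h, ?_, rfl⟩, ?_⟩, ?_⟩
  · intro a ha
    simp only [tgdSucc, List.mem_singleton] at ha
    subst ha
    exact chaseM_mem_chaseStage (by omega)
  · rintro ⟨s, hs, hmap⟩
    simp only [tgdSucc, List.map_cons, List.map_nil, List.cons.injEq, and_true] at hmap
    obtain ⟨j, hj, he⟩ := mfact_mem_chaseStage hM (hs _ (List.mem_singleton_self _))
    have hu : freshU x (k + 1) = freshU x j := hmap.1.symm.trans (mfact_inj.1 he).1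
    have := freshU_injective hx hu
    omega
  · have hstep := TGD.stepResult_of_fresh (t := tgdSucc) (S := chaseStage I x y (2 * k + 2))
      (h := h) (N := 3 * (k + 1)) (o := 5)
      (fun z hz hzf => by rcases tgdSucc_headVars hz hzf with rfl | rfl | rfl <;> simp [h])
      (fun j hj => by
        obtain ⟨k', hk', hj'⟩ := null_mem_adom_chaseStage hconst hx hy hj
        omega)
    convert hstep using 1
    rw [show 2 * k + 3 = 2 * (k + 1) + 1 by ring, chaseStage_two_mul_add_one (k + 1)]
    congr 1
    ext F
    simp [tgdSucc, Atom.inst, chaseM, mfact, freshU, freshV, freshC, h]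

lemma chaseStep_chaseStage_proj (k : ℕ) :
    ChaseStep Tmyth (chaseStage I x y (2 * k + 1)) (chaseStage I x y (2 * k + 2)) := by
  have hx : x.isConst := hconst _ hxy x (by simp [f2])
  have hy : y.isConst := hconst _ hxy y (by simp [f2])
  let h : ℕ → Term := fun i => [freshU x k, freshU x (k + 1), freshC k, freshV y (k + 1),
    freshV y k].getD i x
  refine ⟨tgdProj, by simp [Tmyth_eq], tgdProj.frontier.map h, ⟨⟨h, ?_, rfl⟩, ?_⟩, ?_⟩
  · intro a ha
    simp only [tgdProj, List.mem_singleton] at ha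
    subst ha
    exact chaseM_mem_chaseStage (by omega)
  · rintro ⟨s, hs, hmap⟩
    have hfr := List.map_eq_map_iff.1 hmap
    have hpyr := hs _ (by simp [tgdProj] : (⟨PyrR, [0, 1]⟩ : Atom) ∈ tgdProj.head)
    simp only [Atom.inst, List.map_cons, List.map_nil, hfr 0 (by simp [tgdProj]),
      hfr 1 (by simp [tgdProj])] at hpyr
    exact pyr_notMem_chaseStage hconst k hpyr
  · have hstep := TGD.stepResult_of_fresh (t := tgdProj) (S := chaseStage I x y (2 * k + 1))
      (h := h) (N := 3 * k + 3) (o := 0)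
      (fun z hz hzf => absurd (tgdProj_headVars hz) hzf)
      (fun j hj => by
        obtain ⟨k', hk', hj'⟩ := null_mem_adom_chaseStage hconst hx hy hj
        omega)
    convert hstep using 1
    rw [chaseStage_two_mul_add_two k]
    congr 1
    ext F
    simp [tgdProj, Atom.inst, chaseProj, f2, h]

end ChaseSteps

section ChaseExistence

variable {I : Inst} {x y : Term} (hconst : ∀ F ∈ I, ∀ z ∈ F.args, z.isConst)
  (hM : ∀ F ∈ I, F.rel ≠ MR) (hxy : f2 EncR x y ∈ I)

include hconst hM hxy in
lemma chaseStep_chaseStage (n : ℕ) :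
    ChaseStep Tmyth (chaseStage I x y n) (chaseStage I x y (n + 1)) := by
  obtain ⟨k, rfl | rfl⟩ := Nat.even_or_odd' n
  · cases k with
    | zero => exact chaseStep_chaseStage_zero hconst hxy hM
    | succ k => exact chaseStep_chaseStage_succ hconst hxy hM k
  · exact chaseStep_chaseStage_proj hconst hxy k

include hM in
lemma satisfiesInto_chaseStage (hEnc : ∀ x' y', f2 EncR x' y' ∈ I → x' = x ∧ y' = y) (n : ℕ) :
    ∀ t ∈ Tmyth, t.SatisfiesInto (chaseStage I x y n) (chaseStage I x y (n + 2)) := by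
  simp only [Tmyth_eq, List.mem_cons, List.not_mem_nil, or_false]
  rintro t (rfl | rfl | rfl)
  · refine satisfiesInto_tgdEnc_iff.2 fun u v h => ?_
    obtain ⟨rfl, rfl⟩ := enc_mem_chaseStage hEnc h
    exact ⟨_, _, _, chaseM_mem_chaseStage (k := 0) (by omega)⟩
  · refine satisfiesInto_tgdSucc_iff.2 fun u u' c v' v h => ?_
    obtain ⟨k, hk, he⟩ := mfact_mem_chaseStage hM h
    obtain ⟨-, rfl, -, rfl, -⟩ := mfact_inj.1 he
    exact ⟨_, _, _, chaseM_mem_chaseStage (k := k + 1) (by omega)⟩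
  · refine satisfiesInto_tgdProj_iff.2 fun u u' c v' v h => ?_
    obtain ⟨k, hk, he⟩ := mfact_mem_chaseStage hM h
    obtain ⟨rfl, rfl, rfl, rfl, rfl⟩ := mfact_inj.1 he
    have hsub := chaseProj_subset_chaseStage (I := I) (x := x) (y := y) (k := k)
      (n := n + 2) (by omega)
    exact ⟨hsub (by simp [chaseProj]), hsub (by simp [chaseProj]), hsub (by simp [chaseProj]),
      hsub (by simp [chaseProj])⟩

include hconst hM hxy in
theorem isChaseResult_chaseStage (hEnc : ∀ x' y', f2 EncR x' y' ∈ I → x' = x ∧ y' = y) :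
    IsChaseResult Tmyth I (⋃ n, chaseStage I x y n) :=
  ⟨chaseStage I x y, ⟨chaseStage_zero, fun n => Or.inl (chaseStep_chaseStage hconst hM hxy n)⟩,
    fun i t ht _ happ => ⟨i + 2, by omega,
      Or.inr (TGD.not_applicable_of_satisfiesInto (satisfiesInto_chaseStage hM hEnc i t ht) happ)⟩,
    rfl⟩

end ChaseExistence

/-- Observation 1: there is a database-preserving `ΣQ`-homomorphism from
`chase_{T_myth}(River_κ)` to `River_κ` iff `t_m ≠ p_{m+1}` for some `1 ≤ m < n`. -/
theorem river_hom_iff (p t : List ℕ) (hlen : p.length = t.length) (hn : 1 ≤ p.length)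
    (hp : ∀ x ∈ p, 1 ≤ x) (ht : ∀ x ∈ t, 1 ≤ x) :
    HomTo SQmyth (chase Tmyth (River p t)) (River p t) ↔
      ∃ m, 1 ≤ m ∧ m < p.length ∧ t.getD (m - 1) 0 ≠ p.getD m 0 := by
  have hEnc : ∀ x y, f2 EncR x y ∈ River p t → x = br p.length ∧ y = br (p.length - 1) :=
    fun _ _ => River.of_enc_mem
  have hchase := chase_isChaseResult
    ⟨_, isChaseResult_chaseStage (fun _ => River.isConst_of_mem) (fun _ => River.rel_ne_MR)
      River.enc_mem hEnc⟩
  rw [homTo_chase_Tmyth_iff (x := br p.length) (y := br (p.length - 1)) trivial trivial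
    River.enc_mem hEnc (fun _ => River.rel_ne_MR) hchase]
  exact River.exists_mythWalk_iff ⟨hlen, hn, hp, ht⟩
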